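/- arXiv:1504.03668 — 5 statements merged into one kernel-verified Lean document; each statement's English description precedes it below -/
import Mathlib

section
/- Let l ≥ 3 be an integer and let H be a 3-graph containing no 3-uniform loose cycle of length l. Then there exist l−2 hypergraphs H_1, H_2, …, H_{l−2}, each with vertex set V(H), such that E(H) = E(H_1) ∪ … ∪ E(H_{l−2}) and for each i ∈ {1,…,l−2}, every edge of H_i contains a pair of vertices that is contained in fewer than 2l−2 edges of H_i. -/
open Finset

section Defs

variable {α : Type*} [DecidableEq α]

/-- `e 0, …, e (l-1)` form a loose cycle of length `l`: distinct edges, each of size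
at least 2, cyclically consecutive edges meet in exactly one vertex, all other pairs
of edges are disjoint. -/
def IsLooseCycleOn (l : ℕ) (e : ℕ → Finset α) : Prop :=
  (∀ i < l, ∀ j < l, i ≠ j → e i ≠ e j) ∧
  (∀ i < l, 2 ≤ (e i).card) ∧
  (∀ i < l, (e i ∩ e ((i + 1) % l)).card = 1) ∧
  (∀ i < l, ∀ j < l, j ≠ i → j ≠ (i + 1) % l → i ≠ (j + 1) % l → e i ∩ e j = ∅)

/-- A hypergraph with edge set `E` contains a loose cycle of length `l`. -/
def ContainsLooseCycle (l : ℕ) (E : Set (Finset α)) : Prop :=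
  ∃ e : ℕ → Finset α, IsLooseCycleOn l e ∧ ∀ i < l, e i ∈ E

/-- A hypergraph with edge set `E` contains an `r`-uniform loose cycle of length `l`. -/
def ContainsUniformLooseCycle (r l : ℕ) (E : Set (Finset α)) : Prop :=
  ∃ e : ℕ → Finset α, IsLooseCycleOn l e ∧ (∀ i < l, (e i).card = r) ∧ ∀ i < l, e i ∈ E

/-- `f 0, …, f (k-1)` form a simple path of length `k`: each edge has size at least 2,
consecutive edges meet, non-consecutive edges are disjoint, and any two distinct
edges meet in at most one vertex. -/
def IsSimplePathOn (k : ℕ) (f : ℕ → Finset α) : Prop :=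
  (∀ i < k, 2 ≤ (f i).card) ∧
  (∀ i, i + 1 < k → (f i ∩ f (i + 1)).Nonempty) ∧
  (∀ i < k, ∀ j < k, i < j → j ≠ i + 1 → f i ∩ f j = ∅) ∧
  (∀ i < k, ∀ j < k, i ≠ j → (f i ∩ f j).card ≤ 1)

/-- The simple path `f 0, …, f (k-1)` joins `a` to `b`. -/
def SimplePathJoins (k : ℕ) (f : ℕ → Finset α) (a b : α) : Prop :=
  IsSimplePathOn k f ∧ a ∈ f 0 ∧ b ∈ f (k - 1) ∧
  (2 ≤ k → a ∉ f 1 ∧ b ∉ f (k - 2))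

/-- `p` is a heavy pair of the 3-graph `H` (with respect to the parameter `l`):
it is a pair of vertices contained in at least `2l-2` edges of `H`. -/
def PairHeavy (l : ℕ) (H : Finset (Finset α)) (p : Finset α) : Prop :=
  p.card = 2 ∧ 2 * l - 2 ≤ (H.filter fun e => p ⊆ e).card

/-- `e` is a light edge of the 3-graph `H`: an edge of `H` containing no heavy pair. -/
def EdgeLight (l : ℕ) (H : Finset (Finset α)) (e : Finset α) : Prop :=
  e ∈ H ∧ ∀ p ⊆ e, ¬ PairHeavy l H p

/-- The reduced hypergraph `H*` of a 3-graph `H`: its edges are the light edges of `H`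
together with the heavy pairs of `H`. -/
def Reduced (l : ℕ) (H : Finset (Finset α)) : Set (Finset α) :=
  {e | EdgeLight l H e ∨ PairHeavy l H e}

/-- `(X, Y)` is an extender in the 3-graph `H`. -/
def IsExtender (l : ℕ) (H : Finset (Finset α)) (X Y : Finset α) : Prop :=
  Disjoint X Y ∧ Y.card ≤ 2 * X.card ∧
  ∀ u ∈ X, ∀ v ∈ X, u ≠ v → ∀ S : Finset α,
    Disjoint S ({u, v} ∪ Y) → S.card ≤ 2 * l - 5 →
      ∃ f : ℕ → Finset α, SimplePathJoins 2 f u v ∧ (∀ i < 2, f i ∈ H) ∧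
        ∀ i < 2, Disjoint (f i) S

/-- `X` is an independent set of the hypergraph with edge set `E`. -/
def IndepIn (E : Set (Finset α)) (X : Finset α) : Prop := ∀ e ∈ E, ¬ e ⊆ X

end Defs

/-!
Peel `H` down to its heavy core, the edges all of whose pairs lie in at least `2l - 2` edges,
again and again. The layers peeled off form the decomposition: an edge leaving at step `i` has a
pair of codegree `< 2l - 2` in the `i`-th core, hence in its layer. So it suffices that the
`(l - 2)`-nd core is empty.

An edge of the `(j + 1)`-st core is a triangle of pairs that are heavy in the `j`-th core.
An edge of the `j`-th core through such a pair subdivides it into two pairs heavy in the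
`(j - 1)`-st core; a fresh third vertex exists since at most `l - 2` other vertices of the current
cycle are forbidden. Starting from an edge of the `(l - 2)`-nd core, `l - 3` subdivisions give
vertices `w 0, …, w (l - 1)` whose cyclically consecutive pairs have codegree `≥ 2l - 2` in `H`.
Each of these pairs has at least `l` third vertices outside the `w j`, so by Hall's theorem the
pairs extend to edges of `H` with distinct third vertices: a loose cycle `C_l^3`.
-/

theorem exists_injOn_forall_mem_of_le_card {β : Type*} [DecidableEq β] [Nonempty β] {n : ℕ}
    (t : ℕ → Finset β) (ht : ∀ i < n, n ≤ #(t i)) :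
    ∃ z : ℕ → β, Set.InjOn z (Set.Iio n) ∧ ∀ i < n, z i ∈ t i := by
  obtain ⟨f, hf, hft⟩ := (all_card_le_biUnion_card_iff_exists_injective
    fun i : Fin n => t i).mp fun s => by
      obtain rfl | ⟨i, hi⟩ := s.eq_empty_or_nonempty
      · simp
      calc #s ≤ n := (card_le_univ s).trans_eq (Fintype.card_fin n)
        _ ≤ #(t i) := ht i i.2
        _ ≤ #(s.biUnion fun i => t i) :=
          card_le_card (subset_biUnion_of_mem (fun i : Fin n => t i) hi)
  refine ⟨fun i => if h : i < n then f ⟨i, h⟩ else Classical.arbitrary β, ?_, fun i hi => ?_⟩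
  · intro i hi j hj hij
    simp only [Set.mem_Iio] at hi hj
    simpa [hi, hj] using congrArg Fin.val (hf (by simpa [hi, hj] using hij))
  · simpa [hi] using hft ⟨i, hi⟩

theorem injOn_interleave {β : Type*} {n : ℕ} {w z : ℕ → β} (hw : Set.InjOn w (Set.Iio n))
    (hz : Set.InjOn z (Set.Iio n)) (hwz : ∀ i < n, ∀ j < n, w i ≠ z j) :
    Set.InjOn (fun k => if k % 2 = 0 then w (k / 2) else z (k / 2)) (Set.Iio (2 * n)) := by
  intro a ha b hb hab
  simp only [Set.mem_Iio] at ha hb hab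
  have ha' : a / 2 < n := by omega
  have hb' : b / 2 < n := by omega
  split_ifs at hab with h1 h2 h2
  · have := hw ha' hb' hab; omega
  · exact absurd hab (hwz _ ha' _ hb')
  · exact absurd hab.symm (hwz _ hb' _ ha')
  · have := hz ha' hb' hab; omega

theorem add_one_mod_cases {i l : ℕ} (hi : i < l) :
    (i + 1) % l = i + 1 ∧ i + 1 < l ∨ (i + 1) % l = 0 ∧ i + 1 = l := by
  obtain h | h := (Nat.succ_le_of_lt hi).lt_or_eq
  · exact Or.inl ⟨Nat.mod_eq_of_lt h, h⟩
  · exact Or.inr ⟨h ▸ Nat.mod_self _, h⟩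

theorem isLooseCycleOn_triples {l : ℕ} (hl : 3 ≤ l) :
    IsLooseCycleOn l fun i => ({2 * i, 2 * ((i + 1) % l), 2 * i + 1} : Finset ℕ) := by
  refine ⟨fun i hi j hj hij h => ?_, fun i hi => ?_, fun i hi => ?_, fun i hi j hj h1 h2 h3 => ?_⟩
  · simp only at h
    have hmem : 2 * i + 1 ∈ ({2 * j, 2 * ((j + 1) % l), 2 * j + 1} : Finset ℕ) := h ▸ by simp
    simp only [mem_insert, mem_singleton] at hmem
    omega
  · exact one_lt_card.mpr ⟨2 * i, by simp, 2 * i + 1, by simp, by omega⟩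
  · dsimp only
    have hσ := add_one_mod_cases hi
    have hσσ := add_one_mod_cases (Nat.mod_lt (i + 1) (by omega : 0 < l))
    generalize ((i + 1) % l + 1) % l = b at hσσ ⊢
    generalize (i + 1) % l = a at hσ hσσ ⊢
    rw [card_eq_one]
    refine ⟨2 * a, ?_⟩
    ext x
    simp only [mem_inter, mem_insert, mem_singleton]
    omega
  · dsimp only
    have hσi := add_one_mod_cases hi
    have hσj := add_one_mod_cases hj
    generalize (i + 1) % l = a at hσi h2 ⊢
    generalize (j + 1) % l = b at hσj h3 ⊢
    ext x
    simp only [mem_inter, mem_insert, mem_singleton, notMem_empty, iff_false]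
    omega

section LightPairs

variable {α : Type*} [DecidableEq α]

theorem isLooseCycleOn_image {β : Type*} [DecidableEq β] {l : ℕ} {e : ℕ → Finset α}
    (he : IsLooseCycleOn l e) {v : α → β} {D : Finset α} (hv : Set.InjOn v D)
    (heD : ∀ i < l, e i ⊆ D) : IsLooseCycleOn l fun i => (e i).image v := by
  obtain ⟨hne, hcard, hadj, hdisj⟩ := he
  have hinter : ∀ i < l, ∀ j < l, (e i).image v ∩ (e j).image v = (e i ∩ e j).image v :=
    fun i hi j hj => (image_inter_of_injOn _ _ (hv.mono
      (Set.union_subset (coe_subset.mpr (heD i hi)) (coe_subset.mpr (heD j hj))))).symm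
  have hσ : ∀ i < l, (i + 1) % l < l := fun i hi => Nat.mod_lt _ (by omega)
  refine ⟨fun i hi j hj hij h => hne i hi j hj hij ?_, fun i hi => ?_, fun i hi => ?_,
    fun i hi j hj h1 h2 h3 => ?_⟩
  · exact (image_eq_image_iff_of_injOn hv (heD i hi) (heD j hj)).mp h
  · rw [card_image_of_injOn (hv.mono (coe_subset.mpr (heD i hi)))]
    exact hcard i hi
  · rw [hinter i hi _ (hσ i hi),
      card_image_of_injOn (hv.mono (coe_subset.mpr (inter_subset_left.trans (heD i hi))))]
    exact hadj i hi
  · rw [hinter i hi j hj, hdisj i hi j hj h1 h2 h3, image_empty]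

def codegree (G : Finset (Finset α)) (p : Finset α) : ℕ := #{e ∈ G | p ⊆ e}

theorem codegree_mono {G G' : Finset (Finset α)} (h : G ⊆ G') (p : Finset α) :
    codegree G p ≤ codegree G' p :=
  card_le_card (filter_subset_filter _ h)

def heavyCore (m : ℕ) (G : Finset (Finset α)) : Finset (Finset α) :=
  {e ∈ G | ∀ p ⊆ e, #p = 2 → m ≤ codegree G p}

theorem heavyCore_subset (m : ℕ) (G : Finset (Finset α)) : heavyCore m G ⊆ G :=
  filter_subset _ _

theorem antitone_iterate_heavyCore (m : ℕ) (G : Finset (Finset α)) :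
    Antitone fun i => (heavyCore m)^[i] G :=
  antitone_nat_of_succ_le fun i => by
    simpa only [Function.iterate_succ_apply'] using heavyCore_subset m _

theorem exists_decomposition_of_iterate_heavyCore_eq_empty {m n : ℕ} {G : Finset (Finset α)}
    (hG : (heavyCore m)^[n] G = ∅) :
    ∃ Hs : Fin n → Finset (Finset α), (∀ e, e ∈ G ↔ ∃ i, e ∈ Hs i) ∧
      ∀ i, ∀ e ∈ Hs i, ∃ p ⊆ e, #p = 2 ∧ codegree (Hs i) p < m := by
  have hanti := antitone_iterate_heavyCore m G
  refine ⟨fun i => (heavyCore m)^[i] G \ (heavyCore m)^[i + 1] G, fun e => ⟨fun he => ?_, ?_⟩,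
    fun i e he => ?_⟩
  · obtain ⟨i, hi, hi'⟩ := Nat.exists_not_and_succ_of_not_zero_of_exists
      (p := fun i => e ∉ (heavyCore m)^[i] G) (by simpa using he) ⟨n, by simp [hG]⟩
    have hin : i < n := by
      by_contra! hni
      simpa [hG] using hanti hni (not_not.mp hi)
    exact ⟨⟨i, hin⟩, mem_sdiff.mpr ⟨not_not.mp hi, hi'⟩⟩
  · rintro ⟨i, hi⟩
    exact hanti (Nat.zero_le i) (mem_sdiff.mp hi).1
  · obtain ⟨he, he'⟩ := mem_sdiff.mp he
    rw [Function.iterate_succ_apply', heavyCore, mem_filter] at he'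
    push Not at he'
    obtain ⟨p, hpe, hp, hlt⟩ := he' he
    exact ⟨p, hpe, hp, (codegree_mono sdiff_subset p).trans_lt hlt⟩

def link (G : Finset (Finset α)) (a b : α) : Finset α :=
  {s ∈ G.biUnion id | s ≠ a ∧ s ≠ b ∧ {a, b, s} ∈ G}

theorem mem_link {G : Finset (Finset α)} {a b s : α} :
    s ∈ link G a b ↔ s ≠ a ∧ s ≠ b ∧ {a, b, s} ∈ G := by
  simp only [link, mem_filter, mem_biUnion, id, and_iff_right_iff_imp]
  exact fun ⟨_, _, h⟩ => ⟨_, h, by simp⟩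

theorem codegree_le_card_link {G : Finset (Finset α)} (hG : ∀ e ∈ G, #e = 3) {a b : α}
    (hab : a ≠ b) : codegree G {a, b} ≤ #(link G a b) := by
  refine (card_le_card fun f hf => ?_).trans (card_image_le (f := fun s => ({a, b, s} : Finset α)))
  obtain ⟨hfG, habf⟩ := mem_filter.mp hf
  obtain ⟨s, hs⟩ := card_eq_one.mp <| by
    rw [card_sdiff_of_subset habf, hG f hfG, card_pair hab]
  have hsf : s ∈ f \ {a, b} := hs ▸ mem_singleton_self s
  have hf_eq : f = {a, b, s} := by
    rw [← union_sdiff_of_subset habf, hs]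
    ext; simp
  simp only [mem_sdiff, mem_insert, mem_singleton, not_or] at hsf
  exact mem_image.mpr ⟨s, mem_link.mpr ⟨hsf.2.1, hsf.2.2, hf_eq ▸ hfG⟩, hf_eq.symm⟩

theorem le_card_link_sdiff {G : Finset (Finset α)} (hG : ∀ e ∈ G, #e = 3) {a b : α}
    (hab : a ≠ b) {B : Finset α} (ha : a ∈ B) (hb : b ∈ B) {k : ℕ}
    (hk : #B + k ≤ codegree G {a, b} + 2) : k ≤ #(link G a b \ B) := by
  have hcover : link G a b ⊆ (link G a b \ B) ∪ (B \ {a, b}) := fun s hs => by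
    obtain ⟨hsa, hsb, -⟩ := mem_link.mp hs
    by_cases hsB : s ∈ B <;> simp [hs, hsB, hsa, hsb]
  have hpair := card_sdiff_add_card_eq_card (insert_subset ha (singleton_subset_iff.mpr hb))
  rw [card_pair hab] at hpair
  have := (card_le_card hcover).trans (card_union_le _ _)
  have := codegree_le_card_link hG hab
  omega

/-- The closing pair `{w (n-1), w 0}` is required to be heavy in `G ⊆ H`: it is the pair that
gets subdivided when the cycle is extended. -/
def IsHeavyCycle (m : ℕ) (H G : Finset (Finset α)) (n : ℕ) (w : ℕ → α) : Prop :=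
  Set.InjOn w (Set.Iio n) ∧ (∀ i, i + 1 < n → m ≤ codegree H {w i, w (i + 1)}) ∧
    m ≤ codegree G {w (n - 1), w 0}

theorem exists_isHeavyCycle_three {m : ℕ} {H G : Finset (Finset α)} (hGH : G ⊆ H) {e : Finset α}
    (he : e ∈ heavyCore m G) (he3 : #e = 3) : ∃ w, IsHeavyCycle m H G 3 w := by
  obtain ⟨a, b, c, hab, hac, hbc, rfl⟩ := card_eq_three.mp he3
  have hpairs := (mem_filter.mp he).2
  have heavy : ∀ x y, x ≠ y → x ∈ ({a, b, c} : Finset α) → y ∈ ({a, b, c} : Finset α) →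
      m ≤ codegree G {x, y} := fun x y hxy hx hy =>
    hpairs _ (insert_subset hx (singleton_subset_iff.mpr hy)) (card_pair hxy)
  refine ⟨fun | 0 => a | 1 => b | _ => c, ?_, ?_, heavy c a hac.symm (by simp) (by simp)⟩
  · intro i hi j hj hij
    simp only [Set.mem_Iio] at hi hj
    interval_cases i <;> interval_cases j <;> simp_all [eq_comm]
  · intro i hi
    obtain rfl | rfl : i = 0 ∨ i = 1 := by omega
    · exact (heavy a b hab (by simp) (by simp)).trans (codegree_mono hGH _)
    · exact (heavy b c hbc (by simp) (by simp)).trans (codegree_mono hGH _)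

theorem IsHeavyCycle.extend {m n : ℕ} {H G : Finset (Finset α)} {w : ℕ → α}
    (hw : IsHeavyCycle m H (heavyCore m G) (n + 2) w) (hGH : G ⊆ H) (hG : ∀ e ∈ G, #e = 3)
    (hnm : n + 2 ≤ m) : ∃ w', IsHeavyCycle m H G (n + 3) w' := by
  obtain ⟨hinj, hpath, hclose⟩ := hw
  rw [show n + 2 - 1 = n + 1 by omega] at hclose
  set B := (range (n + 2)).image w
  have hab : w (n + 1) ≠ w 0 := fun h => by
    simpa using hinj (by simp : n + 1 ∈ Set.Iio (n + 2)) (by simp) h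
  obtain ⟨s, hs⟩ : (link (heavyCore m G) (w (n + 1)) (w 0) \ B).Nonempty := by
    refine card_pos.mp (le_card_link_sdiff (fun e he => hG e (heavyCore_subset m G he)) hab
      (B := B) (mem_image_of_mem w (by simp)) (mem_image_of_mem w (by simp)) ?_)
    have : #B ≤ n + 2 := card_image_le.trans (card_range _).le
    omega
  obtain ⟨hsl, hsB⟩ := mem_sdiff.mp hs
  obtain ⟨hsa, hsb, hedge⟩ := mem_link.mp hsl
  have heavy : ∀ x ∈ ({w (n + 1), w 0, s} : Finset α), x ≠ s → m ≤ codegree G {x, s} :=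
    fun x hx hxs => (mem_filter.mp hedge).2 _
      (insert_subset hx (singleton_subset_iff.mpr (by simp))) (card_pair hxs)
  refine ⟨fun | 0 => s | i + 1 => w i, ?_, ?_, heavy _ (by simp) hsa.symm⟩
  · have hsw : ∀ i < n + 2, w i ≠ s := fun i hi h => hsB (h ▸ mem_image_of_mem w (by simpa))
    rintro (_ | i) hi (_ | j) hj hij
    · rfl
    · exact absurd hij.symm (hsw j (by simpa using hj))
    · exact absurd hij (hsw i (by simpa using hi))
    · simp only [Set.mem_Iio] at hi hj
      exact congrArg (· + 1) (hinj (by simpa using hi) (by simpa using hj) hij)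
  · rintro (_ | i) hi
    · rw [pair_comm]
      exact (heavy _ (by simp) hsb.symm).trans (codegree_mono hGH _)
    · exact hpath i (by omega)

theorem exists_isHeavyCycle_of_mem_iterate {m : ℕ} {H : Finset (Finset α)}
    (hH : ∀ e ∈ H, #e = 3) {e : Finset α} :
    ∀ k j, k + 2 ≤ m → e ∈ (heavyCore m)^[j + k + 1] H →
      ∃ w, IsHeavyCycle m H ((heavyCore m)^[j] H) (k + 3) w
  | 0, j, _, he => by
    rw [Function.iterate_succ_apply'] at he
    have hjH := antitone_iterate_heavyCore m H (Nat.zero_le j)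
    exact exists_isHeavyCycle_three hjH he (hH e (hjH (heavyCore_subset m _ he)))
  | k + 1, j, hkm, he => by
    rw [show j + (k + 1) + 1 = j + 1 + k + 1 by omega] at he
    obtain ⟨w, hw⟩ := exists_isHeavyCycle_of_mem_iterate hH k (j + 1) (by omega) he
    rw [Function.iterate_succ_apply'] at hw
    have hjH := antitone_iterate_heavyCore m H (Nat.zero_le j)
    exact hw.extend hjH (fun f hf => hH f (hjH hf)) (by omega)

theorem IsHeavyCycle.le_codegree_succ_mod {m n : ℕ} {H G : Finset (Finset α)} {w : ℕ → α}
    (hw : IsHeavyCycle m H G n w) (hGH : G ⊆ H) {i : ℕ} (hi : i < n) :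
    m ≤ codegree H {w i, w ((i + 1) % n)} := by
  obtain hlt | rfl := (Nat.succ_le_of_lt hi).lt_or_eq
  · rw [Nat.mod_eq_of_lt hlt]
    exact hw.2.1 i hlt
  · have hclose : m ≤ codegree G {w i, w 0} := by simpa using hw.2.2
    rw [Nat.mod_self]
    exact hclose.trans (codegree_mono hGH _)

theorem containsUniformLooseCycle_of_le_codegree {l : ℕ} (hl : 3 ≤ l) {H : Finset (Finset α)}
    (hH : ∀ e ∈ H, #e = 3) {w : ℕ → α} (hw : Set.InjOn w (Set.Iio l))
    (hcyc : ∀ i < l, 2 * l - 2 ≤ codegree H {w i, w ((i + 1) % l)}) :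
    ContainsUniformLooseCycle 3 l (H : Set (Finset α)) := by
  have : Nonempty α := ⟨w 0⟩
  have hσ : ∀ i < l, (i + 1) % l < l := fun i _ => Nat.mod_lt _ (by omega)
  have hne : ∀ i < l, w i ≠ w ((i + 1) % l) := fun i hi h => by
    have := hw (by simpa using hi) (by simpa using hσ i hi) h
    have := add_one_mod_cases hi
    omega
  set W := (range l).image w
  have hW : #W ≤ l := card_image_le.trans (card_range l).le
  -- each pair `{w i, w (i+1)}` has at least `(2l-2) - (l-2) = l` third vertices outside `W`
  obtain ⟨z, hz, hzt⟩ := exists_injOn_forall_mem_of_le_card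
    (fun i => link H (w i) (w ((i + 1) % l)) \ W) fun i hi =>
      le_card_link_sdiff hH (hne i hi) (B := W) (mem_image_of_mem w (mem_range.mpr hi))
        (mem_image_of_mem w (mem_range.mpr (hσ i hi))) (by have := hcyc i hi; omega)
  have hwz : ∀ i < l, ∀ j < l, w i ≠ z j := fun i hi j hj h =>
    (mem_sdiff.mp (hzt j hj)).2 (h ▸ mem_image_of_mem w (mem_range.mpr hi))
  -- `v` lists `w 0, z 0, w 1, z 1, …`, so the `i`-th edge is the image of `{2i, 2(i+1), 2i+1}`
  set v : ℕ → α := fun k => if k % 2 = 0 then w (k / 2) else z (k / 2)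
  have hv : Set.InjOn v (range (2 * l)) := by simpa using injOn_interleave hw hz hwz
  have hedge : ∀ i, ({2 * i, 2 * ((i + 1) % l), 2 * i + 1} : Finset ℕ).image v =
      {w i, w ((i + 1) % l), z i} := fun i => by
    have hodd : (2 * i + 1) % 2 = 1 ∧ (2 * i + 1) / 2 = i := by omega
    simp [v, image_insert, hodd]
  have hmem : ∀ i < l, ({w i, w ((i + 1) % l), z i} : Finset α) ∈ H := fun i hi =>
    (mem_link.mp (mem_sdiff.mp (hzt i hi)).1).2.2
  refine ⟨fun i => {w i, w ((i + 1) % l), z i}, ?_, fun i hi => hH _ (hmem i hi), hmem⟩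
  simp only [← hedge]
  refine isLooseCycleOn_image (isLooseCycleOn_triples hl) hv fun i hi => ?_
  have := hσ i hi
  simp only [insert_subset_iff, singleton_subset_iff, mem_range]
  omega

theorem iterate_heavyCore_eq_empty {l : ℕ} (hl : 3 ≤ l) {H : Finset (Finset α)}
    (hH : ∀ e ∈ H, #e = 3) (hfree : ¬ ContainsUniformLooseCycle 3 l (H : Set (Finset α))) :
    (heavyCore (2 * l - 2))^[l - 2] H = ∅ := by
  by_contra hne
  obtain ⟨e, he⟩ := nonempty_iff_ne_empty.mpr hne
  rw [show l - 2 = 0 + (l - 3) + 1 by omega] at he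
  obtain ⟨w, hw⟩ := exists_isHeavyCycle_of_mem_iterate hH (l - 3) 0 (by omega) he
  rw [show l - 3 + 3 = l by omega] at hw
  exact hfree (containsUniformLooseCycle_of_le_codegree hl hH hw.1
    fun i hi => hw.le_codegree_succ_mod subset_rfl hi)

end LightPairs

/-- Every `C_l^3`-free 3-graph `H` decomposes into `l - 2` hypergraphs
`H_1, …, H_{l-2}` with `E(H) = ⋃ E(H_i)` such that every edge of each `H_i`
contains a pair lying in fewer than `2l - 2` edges of `H_i`. -/
theorem light_pairs_decomposition {α : Type*} [DecidableEq α] (l : ℕ) (hl : 3 ≤ l)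
    (H : Finset (Finset α)) (h3 : ∀ e ∈ H, e.card = 3)
    (hfree : ¬ ContainsUniformLooseCycle 3 l (↑H : Set (Finset α))) :
    ∃ Hs : Fin (l - 2) → Finset (Finset α),
      (∀ e, e ∈ H ↔ ∃ i, e ∈ Hs i) ∧
      ∀ i, ∀ e ∈ Hs i, ∃ p ⊆ e, p.card = 2 ∧
        ((Hs i).filter fun f => p ⊆ f).card < 2 * l - 2 :=
  exists_decomposition_of_iterate_heavyCore_eq_empty (iterate_heavyCore_eq_empty hl h3 hfree)
end

section
/- Let l ≥ 3 be an integer and let H be a 3-graph. Then the set of light edges of H is the union of at most 6l−11 simple hypergraphs; that is, the light edges of H can be partitioned into at most 6l−11 classes such that within each class any two distinct edges intersect in at most one vertex. -/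
open Finset

/-! Two light edges sharing two vertices share one of the three pairs of the first, and each
of those pairs lies in at most `2l - 4` further edges. So in the graph on the light edges whose
adjacency is "meeting in at least two vertices", every degree is at most `3(2l - 4) = 6l - 12`,
and a greedy colouring with `6l - 11` colours splits the light edges into simple classes. -/

namespace SimpleGraph

theorem exists_coloring_on_of_card_adj_lt {V : Type*} (G : SimpleGraph V) [DecidableRel G.Adj]
    {n : ℕ} (s : Finset V) (hdeg : ∀ v ∈ s, #{w ∈ s | G.Adj v w} < n) :
    ∃ c : V → ℕ, (∀ v ∈ s, c v < n) ∧ ∀ v ∈ s, ∀ w ∈ s, G.Adj v w → c v ≠ c w := by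
  classical
  induction s using Finset.induction_on with
  | empty => exact ⟨fun _ => 0, by simp, by simp⟩
  | @insert a s ha ih =>
    obtain ⟨c, hc_lt, hc⟩ := ih fun v hv =>
      (card_le_card (filter_subset_filter _ (subset_insert a s))).trans_lt
        (hdeg v (mem_insert_of_mem hv))
    have hused : #(image c {w ∈ s | G.Adj a w}) < #(range n) := by
      refine card_image_le.trans_lt ?_
      rw [card_range]
      refine (card_le_card fun w hw => ?_).trans_lt (hdeg a (mem_insert_self a s))
      simp only [mem_filter, mem_insert] at hw ⊢
      exact ⟨Or.inr hw.1, hw.2⟩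
    obtain ⟨i, hi_lt, hi_free⟩ := exists_mem_notMem_of_card_lt_card hused
    have hfree : ∀ w ∈ s, G.Adj a w → i ≠ c w := fun w hw hadj h =>
      hi_free (mem_image.2 ⟨w, mem_filter.2 ⟨hw, hadj⟩, h.symm⟩)
    have hne : ∀ w ∈ s, w ≠ a := fun w hw h => ha (h ▸ hw)
    refine ⟨Function.update c a i, ?_, ?_⟩
    · intro v hv
      rcases mem_insert.1 hv with rfl | hv'
      · simpa using hi_lt
      · simpa [hne v hv'] using hc_lt v hv'
    · intro v hv w hw hadj
      rcases mem_insert.1 hv with rfl | hv' <;> rcases mem_insert.1 hw with rfl | hw'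
      · exact absurd hadj (G.loopless.irrefl _)
      · simpa [hne w hw'] using hfree w hw' hadj
      · simpa [hne v hv'] using (hfree v hv' hadj.symm).symm
      · simpa [hne v hv', hne w hw'] using hc v hv' w hw' hadj

end SimpleGraph

section Overlap

variable (α : Type*) [DecidableEq α]

def overlapGraph : SimpleGraph (Finset α) where
  Adj e f := e ≠ f ∧ 2 ≤ #(e ∩ f)
  symm := ⟨fun e f h => ⟨h.1.symm, inter_comm e f ▸ h.2⟩⟩
  loopless := ⟨fun _ h => h.1 rfl⟩

variable {α}

@[simp]
theorem overlapGraph_adj {e f : Finset α} : (overlapGraph α).Adj e f ↔ e ≠ f ∧ 2 ≤ #(e ∩ f) :=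
  Iff.rfl

instance : DecidableRel (overlapGraph α).Adj := fun _ _ => decidable_of_iff' _ overlapGraph_adj

theorem card_filter_overlapGraph_adj_le (H : Finset (Finset α)) {e : Finset α} (he : e ∈ H)
    {m : ℕ} (hpair : ∀ p ⊆ e, #p = 2 → #{f ∈ H | p ⊆ f} ≤ m) :
    #{f ∈ H | (overlapGraph α).Adj e f} ≤ (#e).choose 2 * (m - 1) := by
  have hcover : {f ∈ H | (overlapGraph α).Adj e f} ⊆
      (e.powersetCard 2).biUnion fun p => {f ∈ H | p ⊆ f}.erase e := by
    intro f hf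
    obtain ⟨hfH, hfe, hcard⟩ := mem_filter.1 hf
    obtain ⟨p, hp, hpcard⟩ := exists_subset_card_eq hcard
    exact mem_biUnion.2 ⟨p, mem_powersetCard.2 ⟨hp.trans inter_subset_left, hpcard⟩,
      mem_erase.2 ⟨hfe.symm, mem_filter.2 ⟨hfH, hp.trans inter_subset_right⟩⟩⟩
  refine (card_le_card hcover).trans ?_
  rw [← card_powersetCard]
  refine card_biUnion_le_card_mul _ _ _ fun p hp => ?_
  obtain ⟨hpe, hpcard⟩ := mem_powersetCard.1 hp
  rw [card_erase_of_mem (mem_filter.2 ⟨he, hpe⟩)]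
  exact Nat.sub_le_sub_right (hpair p hpe hpcard) 1

variable {l : ℕ} {H : Finset (Finset α)} {e : Finset α}

theorem EdgeLight.card_filter_superset_le (he : EdgeLight l H e) {p : Finset α} (hpe : p ⊆ e)
    (hp : #p = 2) : #{f ∈ H | p ⊆ f} ≤ 2 * l - 3 := by
  have := he.2 p hpe
  simp only [PairHeavy, hp, true_and, not_le] at this
  omega

theorem EdgeLight.card_filter_overlapGraph_adj_lt (hl : 2 ≤ l) (he : EdgeLight l H e)
    (he3 : #e = 3) :
    #{f ∈ H | (overlapGraph α).Adj e f} < 6 * l - 11 :=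
  calc #{f ∈ H | (overlapGraph α).Adj e f}
      ≤ (#e).choose 2 * (2 * l - 3 - 1) :=
        card_filter_overlapGraph_adj_le H he.1 fun _ => he.card_filter_superset_le
    _ < 6 * l - 11 := by rw [he3, Nat.choose_two_right]; omega

end Overlap

/-- The light edges of a 3-graph `H` are the union of at most `6l - 11`
simple hypergraphs. -/
theorem light_edges_decomposition {α : Type*} [DecidableEq α] (l : ℕ) (hl : 3 ≤ l)
    (H : Finset (Finset α)) (h3 : ∀ e ∈ H, e.card = 3) :
    ∃ Hs : Fin (6 * l - 11) → Finset (Finset α),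
      (∀ e, EdgeLight l H e ↔ ∃ i, e ∈ Hs i) ∧
      ∀ i, ∀ e ∈ Hs i, ∀ f ∈ Hs i, e ≠ f → (e ∩ f).card ≤ 1 := by
  classical
  set L := {e ∈ H | EdgeLight l H e}
  have hmemL : ∀ e, e ∈ L ↔ EdgeLight l H e := fun e =>
    mem_filter.trans ⟨And.right, fun h => ⟨h.1, h⟩⟩
  have hdeg : ∀ e ∈ L, #{f ∈ L | (overlapGraph α).Adj e f} < 6 * l - 11 := fun e he =>
    have hlight := (hmemL e).1 he
    (card_le_card (filter_subset_filter _ (filter_subset _ H))).trans_lt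
      (hlight.card_filter_overlapGraph_adj_lt (by omega) (h3 e hlight.1))
  obtain ⟨c, hc_lt, hc⟩ := (overlapGraph α).exists_coloring_on_of_card_adj_lt L hdeg
  refine ⟨fun i => {e ∈ L | c e = i}, fun e => ?_, fun i e he f hf hef => ?_⟩
  · rw [← hmemL]
    exact ⟨fun h => ⟨⟨c e, hc_lt e h⟩, mem_filter.2 ⟨h, rfl⟩⟩,
      fun ⟨_, h⟩ => (mem_filter.1 h).1⟩
  · rw [mem_filter] at he hf
    by_contra hcard
    exact hc e he.1 f hf.1 (overlapGraph_adj.2 ⟨hef, by omega⟩) (he.2.trans hf.2.symm)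
end

section
/- Let l ≥ 3 be an integer, let H be a 3-graph containing no 3-uniform loose cycle of length l, and let (X,Y) be an extender in H. Then for any distinct u, v ∈ X there is no simple path of length l−2 joining u to v in the induced subhypergraph of H + H* on V(H)∖Y. -/
open Finset

/-- In a `C_l^3`-free 3-graph `H` with extender `(X, Y)`, no two distinct vertices
of `X` are joined by a simple path of length `l - 2` in `(H + H*)[V(H) \ Y]`. -/
theorem no_path_between_extender_vertices {α : Type*} [DecidableEq α] (l : ℕ)
    (hl : 3 ≤ l) (H : Finset (Finset α)) (h3 : ∀ e ∈ H, e.card = 3)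
    (hfree : ¬ ContainsUniformLooseCycle 3 l (↑H : Set (Finset α)))
    (X Y : Finset α) (hXY : IsExtender l H X Y) :
    ∀ u ∈ X, ∀ v ∈ X, u ≠ v →
      ¬ ∃ f : ℕ → Finset α, SimplePathJoins (l - 2) f u v ∧
        ∀ i < l - 2,
          (f i ∈ (↑H : Set (Finset α)) ∪ Reduced l H) ∧ Disjoint (f i) Y := by
  intro u hu v hv huv
  rintro ⟨f, hjoin, hmem⟩
  have hk1 : 1 ≤ l - 2 := by omega
  set k := l - 2 with hkdef
  have hkl : k + 2 = l := by omega
  obtain ⟨⟨hfc, hfcons, hfdisj, hfint⟩, hu0, hvk, hends⟩ := hjoin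
  have hclass : ∀ i < k, (f i ∈ H ∧ (f i).card = 3) ∨ (PairHeavy l H (f i) ∧ (f i).card = 2) := by
    intro i hi
    rcases (hmem i hi).1 with h | h
    · exact Or.inl ⟨h, h3 _ h⟩
    · rcases h with h | h
      · exact Or.inl ⟨h.1, h3 _ h.1⟩
      · exact Or.inr ⟨h, h.1⟩
  set P : Finset ℕ := (Finset.range k).filter (fun i => (f i).card = 2) with hPdef
  have hPmem : ∀ i, i ∈ P ↔ i < k ∧ (f i).card = 2 := by
    intro i; simp [hPdef]
  have hPheavy : ∀ i ∈ P, PairHeavy l H (f i) := by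
    intro i hi
    obtain ⟨hik, hic⟩ := (hPmem i).1 hi
    rcases hclass i hik with h | h
    · exfalso; have := h.2; omega
    · exact h.1
  have hnotP : ∀ i < k, i ∉ P → f i ∈ H ∧ (f i).card = 3 := by
    intro i hik hiP
    rcases hclass i hik with h | h
    · exact h
    · exact absurd ((hPmem i).2 ⟨hik, h.2⟩) hiP
  set V : Finset α := (Finset.range k).biUnion f with hVdef
  have hfV : ∀ i < k, f i ⊆ V := by
    intro i hik w hw
    rw [hVdef]
    exact Finset.mem_biUnion.mpr ⟨i, Finset.mem_range.mpr hik, hw⟩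
  have hVY : Disjoint V Y := by
    rw [hVdef, Finset.disjoint_biUnion_left]
    intro i hi
    exact (hmem i (Finset.mem_range.mp hi)).2
  have hVcard : V.card + P.card + k ≤ 3 * k + 1 := by
    have hsum : ∀ m, 1 ≤ m → m ≤ k →
        ((Finset.range m).biUnion f).card + m ≤ 1 + ∑ j ∈ Finset.range m, (f j).card := by
      intro m
      induction m with
      | zero => omega
      | succ n ih =>
        intro _ hmk
        by_cases hn0 : n = 0
        · subst hn0
          simp
        · have hn1 : 1 ≤ n := by omega
          have ihn := ih hn1 (by omega)
          rw [Finset.sum_range_succ, Finset.range_add_one, Finset.biUnion_insert]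
          have hint2 : (f n ∩ (Finset.range n).biUnion f).Nonempty := by
            have h := hfcons (n-1) (by omega)
            have hnn : n - 1 + 1 = n := by omega
            rw [hnn] at h
            obtain ⟨w, hw⟩ := h
            exact ⟨w, Finset.mem_inter.mpr ⟨(Finset.mem_inter.mp hw).2,
              Finset.mem_biUnion.mpr ⟨n-1, Finset.mem_range.mpr (by omega),
                (Finset.mem_inter.mp hw).1⟩⟩⟩
          have hcard1 := Finset.card_union_add_card_inter (f n) ((Finset.range n).biUnion f)
          have hpos : 1 ≤ (f n ∩ (Finset.range n).biUnion f).card := Finset.card_pos.mpr hint2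
          omega
    have h1 := hsum k hk1 le_rfl
    rw [← hVdef] at h1
    have h2 : ∑ j ∈ Finset.range k, (f j).card + P.card = 3 * k := by
      have hpt : ∀ j ∈ Finset.range k, (f j).card + (if (f j).card = 2 then 1 else 0) = 3 := by
        intro j hj
        rcases hclass j (Finset.mem_range.mp hj) with h | h
        · simp [h.2]
        · simp [h.2]
      calc ∑ j ∈ Finset.range k, (f j).card + P.card
          = ∑ j ∈ Finset.range k, ((f j).card + if (f j).card = 2 then 1 else 0) := by
            rw [Finset.sum_add_distrib, hPdef, Finset.card_filter]
        _ = ∑ _j ∈ Finset.range k, 3 := Finset.sum_congr rfl hpt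
        _ = 3 * k := by simp [Finset.sum_const, Finset.card_range, Nat.mul_comm]
    omega
  have huV : u ∈ V := hfV 0 (by omega) hu0
  have hvV : v ∈ V := hfV (k-1) (by omega) hvk
  set S : Finset α := V \ {u, v} with hSdef
  have huvV : ({u, v} : Finset α) ⊆ V := by
    intro w hw
    rcases Finset.mem_insert.mp hw with h | h
    · exact h ▸ huV
    · exact (Finset.mem_singleton.mp h) ▸ hvV
  have huvcard : ({u, v} : Finset α).card = 2 := by
    rw [Finset.card_insert_of_notMem (by simp [huv]), Finset.card_singleton]
  have hV2 : 2 ≤ V.card := huvcard ▸ Finset.card_le_card huvV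
  have hScard : S.card + 2 = V.card := by
    rw [hSdef, Finset.card_sdiff_of_subset huvV, huvcard]
    omega
  have hSle : S.card ≤ 2 * l - 5 := by omega
  have hSdisj : Disjoint S ({u, v} ∪ Y) := by
    rw [Finset.disjoint_union_right]
    exact ⟨Finset.sdiff_disjoint, Finset.disjoint_of_subset_left Finset.sdiff_subset hVY⟩
  obtain ⟨p, hpjoin, hpH, hpS⟩ := hXY.2.2 u hu v hv huv S hSdisj hSle
  obtain ⟨⟨hpc, hpcons, hpdisj, hpint⟩, hup0, hvp1', hpends⟩ := hpjoin
  have hvp1 : v ∈ p 1 := hvp1'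
  have hup1 : u ∉ p 1 := (hpends (le_refl 2)).1
  have hvp0 : v ∉ p 0 := (hpends (le_refl 2)).2
  have hp0card : (p 0).card = 3 := h3 _ (hpH 0 (by omega))
  have hp1card : (p 1).card = 3 := h3 _ (hpH 1 (by omega))
  have hp01 : (p 0 ∩ p 1).card = 1 := by
    have h1 : (p 0 ∩ p 1).card ≤ 1 := hpint 0 (by omega) 1 (by omega) (by omega)
    have h2 : (p 0 ∩ p 1).Nonempty := hpcons 0 (by omega)
    have := Finset.card_pos.mpr h2
    omega
  have hpV : ∀ t < 2, ∀ w, w ∈ p t → w ∈ V → w = u ∨ w = v := by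
    intro t ht w hwp hwV
    by_contra hcon
    push_neg at hcon
    have hwS : w ∈ S := by
      rw [hSdef]
      exact Finset.mem_sdiff.mpr ⟨hwV, by simp [hcon.1, hcon.2]⟩
    exact (Finset.disjoint_left.mp (hpS t ht)) hwp hwS
  have hunf : ∀ j, 1 ≤ j → j < k → u ∉ f j := by
    intro j hj1 hjk hcon
    by_cases hj : j = 1
    · subst hj; exact (hends (by omega)).1 hcon
    · have hdd := hfdisj 0 (by omega) j hjk (by omega) (by omega)
      have hmm : u ∈ f 0 ∩ f j := Finset.mem_inter.mpr ⟨hu0, hcon⟩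
      rw [hdd] at hmm
      exact absurd hmm (Finset.notMem_empty u)
  have hvnf : ∀ j, j + 1 < k → v ∉ f j := by
    intro j hj hcon
    by_cases hj2 : j = k - 2
    · exact (hends (by omega)).2 (hj2 ▸ hcon)
    · have hdd := hfdisj j (by omega) (k-1) (by omega) (by omega) (by omega)
      have hmm : v ∈ f j ∩ f (k-1) := Finset.mem_inter.mpr ⟨hcon, hvk⟩
      rw [hdd] at hmm
      exact absurd hmm (Finset.notMem_empty v)
  -- selecting fresh third vertices for heavy pairs
  have hxsel : ∀ m, m ≤ k → ∃ x : ℕ → α, ∀ i ∈ P, i < m →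
      insert (x i) (f i) ∈ H ∧ x i ∉ V ∧ x i ∉ p 0 ∧ x i ∉ p 1 ∧
      ∀ j ∈ P, j < i → x i ≠ x j := by
    intro m
    induction m with
    | zero => exact fun _ => ⟨fun _ => u, fun i _ hi => absurd hi (Nat.not_lt_zero i)⟩
    | succ n ih =>
      intro hnk
      obtain ⟨x, hx⟩ := ih (by omega)
      by_cases hnP : n ∈ P
      · have hfn2 : (f n).card = 2 := ((hPmem n).1 hnP).2
        have hnk' : n < k := ((hPmem n).1 hnP).1
        set T : Finset α := (V ∪ p 0 ∪ p 1 ∪ (P.filter (· < n)).image x) \ f n with hTdef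
        have hfnV : f n ⊆ V := hfV n hnk'
        have hT1 : T ⊆ (V \ f n) ∪ ((p 0 ∪ p 1) \ {u, v}) ∪ (P.filter (· < n)).image x := by
          intro w hw
          rw [hTdef, Finset.mem_sdiff] at hw
          obtain ⟨hw1, hw2⟩ := hw
          by_cases hwV : w ∈ V
          · exact Finset.mem_union_left _ (Finset.mem_union_left _
              (Finset.mem_sdiff.mpr ⟨hwV, hw2⟩))
          · have hwuv : w ∉ ({u, v} : Finset α) := by
              intro hc
              rcases Finset.mem_insert.mp hc with h | h
              · exact hwV (h ▸ huV)
              · exact hwV ((Finset.mem_singleton.mp h) ▸ hvV)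
            rcases Finset.mem_union.mp hw1 with h1 | h1
            · rcases Finset.mem_union.mp h1 with h2 | h2
              · rcases Finset.mem_union.mp h2 with h3' | h3'
                · exact absurd h3' hwV
                · exact Finset.mem_union_left _ (Finset.mem_union_right _
                    (Finset.mem_sdiff.mpr ⟨Finset.mem_union_left _ h3', hwuv⟩))
              · exact Finset.mem_union_left _ (Finset.mem_union_right _
                  (Finset.mem_sdiff.mpr ⟨Finset.mem_union_right _ h2, hwuv⟩))
            · exact Finset.mem_union_right _ h1
        have hc1 : (V \ f n).card + 2 = V.card := by
          rw [Finset.card_sdiff_of_subset hfnV, hfn2]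
          have := Finset.card_le_card hfnV
          omega
        have hpu : ({u, v} : Finset α) ⊆ p 0 ∪ p 1 := by
          intro w hw
          rcases Finset.mem_insert.mp hw with h | h
          · exact h ▸ Finset.mem_union_left _ hup0
          · exact (Finset.mem_singleton.mp h) ▸ Finset.mem_union_right _ hvp1
        have hc2 : ((p 0 ∪ p 1) \ {u, v}).card ≤ 3 := by
          have h5 := Finset.card_union_add_card_inter (p 0) (p 1)
          have h6 := Finset.card_sdiff_of_subset hpu
          rw [huvcard] at h6
          omega
        have hc3 : ((P.filter (· < n)).image x).card + 1 ≤ P.card := by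
          have hsub : P.filter (· < n) ⊆ P.erase n := by
            intro j hj
            rw [Finset.mem_erase]
            have h1 := (Finset.mem_filter.mp hj).2
            exact ⟨by omega, (Finset.mem_filter.mp hj).1⟩
          have h1 := Finset.card_le_card hsub
          have h2 := Finset.card_erase_add_one hnP
          have h3' := Finset.card_image_le (s := P.filter (· < n)) (f := x)
          omega
        have hTcard : T.card ≤ 2 * l - 3 := by
          have h1 := Finset.card_le_card hT1
          have h2 := Finset.card_union_le (V \ f n ∪ (p 0 ∪ p 1) \ {u, v})
            ((P.filter (· < n)).image x)
          have h3' := Finset.card_union_le (V \ f n) ((p 0 ∪ p 1) \ {u, v})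
          omega
        have hheavy := hPheavy n hnP
        set N : Finset (Finset α) := H.filter (fun e => f n ⊆ e) with hNdef
        have hNcard : 2 * l - 2 ≤ N.card := by rw [hNdef]; exact hheavy.2
        have hNmem : ∀ e ∈ N, e ∈ H ∧ f n ⊆ e := by
          intro e he
          rw [hNdef, Finset.mem_filter] at he
          exact he
        have hNsd : ∀ e ∈ N, (e \ f n).card = 1 := by
          intro e he
          rw [Finset.card_sdiff_of_subset (hNmem e he).2, h3 e (hNmem e he).1, hfn2]
        set Bad : Finset (Finset α) := N.filter (fun e => e \ f n ⊆ T) with hBdef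
        have hBadcard : Bad.card ≤ T.card := by
          have h1 : Bad.card ≤ (T.image (fun y => ({y} : Finset α))).card := by
            apply Finset.card_le_card_of_injOn (fun e => e \ f n)
            · intro e he
              simp only [Finset.mem_coe, hBdef, Finset.mem_filter] at he
              obtain ⟨y, hy⟩ := Finset.card_eq_one.mp (hNsd e he.1)
              have hyT : y ∈ T := he.2 (by rw [hy]; exact Finset.mem_singleton_self y)
              exact Finset.mem_image.mpr ⟨y, hyT, hy.symm⟩
            · intro e he e' he' heq
              have heN : e ∈ N := by
                have := Finset.mem_coe.mp he
                simp only [hBdef, Finset.mem_filter] at this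
                exact this.1
              have heN' : e' ∈ N := by
                have := Finset.mem_coe.mp he'
                simp only [hBdef, Finset.mem_filter] at this
                exact this.1
              calc e = e \ f n ∪ f n := (Finset.sdiff_union_of_subset (hNmem e heN).2).symm
                _ = e' \ f n ∪ f n := by
                      have heq' : e \ f n = e' \ f n := heq
                      rw [heq']
                _ = e' := Finset.sdiff_union_of_subset (hNmem e' heN').2
          have h2 := Finset.card_image_le (s := T) (f := fun y => ({y} : Finset α))
          omega
        have hexists : ∃ e ∈ N, ¬ (e \ f n ⊆ T) := by
          by_contra hcontr
          push_neg at hcontr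
          have hNB : N ⊆ Bad := by
            intro e he
            rw [hBdef, Finset.mem_filter]
            exact ⟨he, hcontr e he⟩
          have := Finset.card_le_card hNB
          omega
        obtain ⟨e, heN, heT⟩ := hexists
        obtain ⟨y, hy⟩ := Finset.card_eq_one.mp (hNsd e heN)
        have hyT : y ∉ T := by
          intro hc
          exact heT (by rw [hy]; exact Finset.singleton_subset_iff.mpr hc)
        have hye : y ∈ e ∧ y ∉ f n := by
          have hym : y ∈ e \ f n := by rw [hy]; exact Finset.mem_singleton_self y
          exact ⟨(Finset.mem_sdiff.mp hym).1, (Finset.mem_sdiff.mp hym).2⟩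
        have hins : insert y (f n) = e := by
          apply Finset.eq_of_subset_of_card_le
          · intro w hw
            rcases Finset.mem_insert.mp hw with h | h
            · exact h ▸ hye.1
            · exact (hNmem e heN).2 h
          · rw [h3 e (hNmem e heN).1, Finset.card_insert_of_notMem hye.2, hfn2]
        have hy_mk : ∀ w, w ∈ V ∪ p 0 ∪ p 1 ∪ (P.filter (· < n)).image x → w ∉ f n → w ∈ T := by
          intro w h1 h2
          rw [hTdef]
          exact Finset.mem_sdiff.mpr ⟨h1, h2⟩
        have hyV : y ∉ V := fun hc => hyT (hy_mk y (Finset.mem_union_left _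
          (Finset.mem_union_left _ (Finset.mem_union_left _ hc))) hye.2)
        have hyp0 : y ∉ p 0 := fun hc => hyT (hy_mk y (Finset.mem_union_left _
          (Finset.mem_union_left _ (Finset.mem_union_right _ hc))) hye.2)
        have hyp1 : y ∉ p 1 := fun hc => hyT (hy_mk y (Finset.mem_union_left _
          (Finset.mem_union_right _ hc)) hye.2)
        have hyx : ∀ j ∈ P, j < n → y ≠ x j := fun j hj hjn hc => hyT (hy_mk y
          (Finset.mem_union_right _ (Finset.mem_image.mpr
            ⟨j, Finset.mem_filter.mpr ⟨hj, hjn⟩, hc.symm⟩)) hye.2)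
        refine ⟨Function.update x n y, ?_⟩
        intro i hiP him
        rcases Nat.lt_or_ge i n with hin | hin
        · rw [Function.update_of_ne (by omega)]
          obtain ⟨a1, a2, a3, a4, a5⟩ := hx i hiP hin
          refine ⟨a1, a2, a3, a4, ?_⟩
          intro j hjP hji
          rw [Function.update_of_ne (by omega)]
          exact a5 j hjP hji
        · have hieq : i = n := by omega
          subst hieq
          rw [Function.update_self]
          refine ⟨by rw [hins]; exact (hNmem e heN).1, hyV, hyp0, hyp1, ?_⟩
          intro j hjP hji
          rw [Function.update_of_ne (by omega)]
          exact hyx j hjP hji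
      · refine ⟨x, ?_⟩
        intro i hiP him
        have hin : i ≠ n := fun h => hnP (h ▸ hiP)
        exact hx i hiP (by omega)
  obtain ⟨x, hx⟩ := hxsel k le_rfl
  have hxP : ∀ i ∈ P, insert (x i) (f i) ∈ H ∧ x i ∉ V ∧ x i ∉ p 0 ∧ x i ∉ p 1 ∧
      ∀ j ∈ P, j < i → x i ≠ x j :=
    fun i hiP => hx i hiP ((hPmem i).1 hiP).1
  set g : ℕ → Finset α := fun i => if i ∈ P then insert (x i) (f i) else f i with hgdef
  have hgP : ∀ i ∈ P, g i = insert (x i) (f i) := by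
    intro i hi; rw [hgdef]; simp [hi]
  have hgnP : ∀ i, i ∉ P → g i = f i := by
    intro i hi; rw [hgdef]; simp [hi]
  have hfg : ∀ i, f i ⊆ g i := by
    intro i
    by_cases hiP : i ∈ P
    · rw [hgP i hiP]; exact Finset.subset_insert _ _
    · rw [hgnP i hiP]
  have hgH : ∀ i < k, g i ∈ H := by
    intro i hik
    by_cases hiP : i ∈ P
    · rw [hgP i hiP]; exact (hxP i hiP).1
    · rw [hgnP i hiP]; exact (hnotP i hik hiP).1
  have hgcard : ∀ i < k, (g i).card = 3 := fun i hik => h3 _ (hgH i hik)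
  have hmemg : ∀ i w, w ∈ g i → w ∈ f i ∨ (i ∈ P ∧ w = x i) := by
    intro i w hw
    by_cases hiP : i ∈ P
    · rw [hgP i hiP] at hw
      rcases Finset.mem_insert.mp hw with h | h
      · exact Or.inr ⟨hiP, h⟩
      · exact Or.inl h
    · rw [hgnP i hiP] at hw
      exact Or.inl hw
  have hgint : ∀ i < k, ∀ j < k, i ≠ j → g i ∩ g j = f i ∩ f j := by
    intro i hik j hjk hij
    apply Finset.Subset.antisymm
    · intro w hw
      obtain ⟨hwi, hwj⟩ := Finset.mem_inter.mp hw
      rcases hmemg i w hwi with h1 | ⟨hiP, h1⟩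
      · rcases hmemg j w hwj with h2 | ⟨hjP, h2⟩
        · exact Finset.mem_inter.mpr ⟨h1, h2⟩
        · exact absurd (h2 ▸ hfV i hik h1) (hxP j hjP).2.1
      · rcases hmemg j w hwj with h2 | ⟨hjP, h2⟩
        · exact absurd (h1 ▸ hfV j hjk h2) (hxP i hiP).2.1
        · exfalso
          rcases Nat.lt_or_ge i j with h | h
          · exact (hxP j hjP).2.2.2.2 i hiP h (h2.symm.trans h1)
          · exact (hxP i hiP).2.2.2.2 j hjP (by omega) (h1.symm.trans h2)
    · exact Finset.inter_subset_inter (hfg i) (hfg j)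
  have hgpt : ∀ i < k, ∀ t < 2, g i ∩ p t = f i ∩ p t := by
    intro i hik t ht
    apply Finset.Subset.antisymm
    · intro w hw
      obtain ⟨hwi, hwp⟩ := Finset.mem_inter.mp hw
      rcases hmemg i w hwi with h1 | ⟨hiP, h1⟩
      · exact Finset.mem_inter.mpr ⟨h1, hwp⟩
      · exfalso
        subst h1
        rcases (by omega : t = 0 ∨ t = 1) with rfl | rfl
        · exact (hxP i hiP).2.2.1 hwp
        · exact (hxP i hiP).2.2.2.1 hwp
    · exact Finset.inter_subset_inter (hfg i) (Finset.Subset.refl _)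
  have hgp1e : ∀ i, i + 1 < k → g i ∩ p 1 = ∅ := by
    intro i hik
    rw [hgpt i (by omega) 1 (by omega), Finset.eq_empty_iff_forall_notMem]
    intro w hw
    obtain ⟨hwf, hwp⟩ := Finset.mem_inter.mp hw
    rcases hpV 1 (by omega) w hwp (hfV i (by omega) hwf) with rfl | rfl
    · exact hup1 hwp
    · exact hvnf i hik hwf
  have hgk1 : g (k-1) ∩ p 1 = {v} := by
    rw [hgpt (k-1) (by omega) 1 (by omega)]
    apply Finset.Subset.antisymm
    · intro w hw
      obtain ⟨hwf, hwp⟩ := Finset.mem_inter.mp hw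
      rcases hpV 1 (by omega) w hwp (hfV (k-1) (by omega) hwf) with rfl | rfl
      · exact absurd hwp hup1
      · exact Finset.mem_singleton_self _
    · intro w hw
      rw [Finset.mem_singleton] at hw
      subst hw
      exact Finset.mem_inter.mpr ⟨hvk, hvp1⟩
  have hg0p0 : g 0 ∩ p 0 = {u} := by
    rw [hgpt 0 (by omega) 0 (by omega)]
    apply Finset.Subset.antisymm
    · intro w hw
      obtain ⟨hwf, hwp⟩ := Finset.mem_inter.mp hw
      rcases hpV 0 (by omega) w hwp (hfV 0 (by omega) hwf) with rfl | rfl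
      · exact Finset.mem_singleton_self _
      · exact absurd hwp hvp0
    · intro w hw
      rw [Finset.mem_singleton] at hw
      subst hw
      exact Finset.mem_inter.mpr ⟨hu0, hup0⟩
  have hgp0e : ∀ i, 1 ≤ i → i < k → g i ∩ p 0 = ∅ := by
    intro i h1 hik
    rw [hgpt i hik 0 (by omega), Finset.eq_empty_iff_forall_notMem]
    intro w hw
    obtain ⟨hwf, hwp⟩ := Finset.mem_inter.mp hw
    rcases hpV 0 (by omega) w hwp (hfV i hik hwf) with rfl | rfl
    · exact hunf i h1 hik hwf
    · exact hvp0 hwp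
  -- the cycle
  set c : ℕ → Finset α := fun i => if i < k then g i else if i = k then p 1 else p 0 with hcdef
  have hclt : ∀ i < k, c i = g i := by
    intro i hi; rw [hcdef]; exact if_pos hi
  have hck : c k = p 1 := by
    rw [hcdef]; exact (if_neg (lt_irrefl k)).trans (if_pos rfl)
  have hck1 : c (k+1) = p 0 := by
    rw [hcdef]; exact (if_neg (by omega)).trans (if_neg (by omega))
  have hcard3 : ∀ i < k + 2, (c i).card = 3 := by
    intro i hi
    rcases (by omega : i < k ∨ i = k ∨ i = k + 1) with h | h | h
    · rw [hclt i h]; exact hgcard i h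
    · rw [h, hck]; exact hp1card
    · rw [h, hck1]; exact hp0card
  have hcH : ∀ i < k + 2, c i ∈ H := by
    intro i hi
    rcases (by omega : i < k ∨ i = k ∨ i = k + 1) with h | h | h
    · rw [hclt i h]; exact hgH i h
    · rw [h, hck]; exact hpH 1 (by omega)
    · rw [h, hck1]; exact hpH 0 (by omega)
  have hcons : ∀ i, i + 1 < k + 2 → (c i ∩ c (i+1)).card = 1 := by
    intro i hi
    rcases (by omega : i + 1 < k ∨ i + 1 = k ∨ i = k) with h | h | h
    · rw [hclt i (by omega), hclt (i+1) h, hgint i (by omega) (i+1) h (by omega)]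
      have h1 := hfint i (by omega) (i+1) h (by omega)
      have h2 := Finset.card_pos.mpr (hfcons i h)
      omega
    · have hik : i = k - 1 := by omega
      rw [h, hck, hclt i (by omega), hik, hgk1, Finset.card_singleton]
    · rw [h, hck, hck1, Finset.inter_comm]
      exact hp01
  have hwrap : (c (k+1) ∩ c 0).card = 1 := by
    rw [hck1, hclt 0 (by omega), Finset.inter_comm, hg0p0, Finset.card_singleton]
  have hdisjc : ∀ i j, i < j → j < k + 2 → j ≠ i + 1 → ¬(i = 0 ∧ j = k + 1) → c i ∩ c j = ∅ := by
    intro i j hij hjl hji hnot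
    rcases (by omega : j < k ∨ j = k ∨ j = k + 1) with h | h | h
    · rw [hclt i (by omega), hclt j h, hgint i (by omega) j h (by omega)]
      exact hfdisj i (by omega) j h hij hji
    · rw [hclt i (by omega), h, hck]
      exact hgp1e i (by omega)
    · have hi0 : 1 ≤ i := by
        rcases Nat.eq_zero_or_pos i with h0 | h0
        · exact absurd ⟨h0, h⟩ hnot
        · exact h0
      have hik : i < k := by omega
      rw [hclt i hik, h, hck1]
      exact hgp0e i hi0 hik
  have hsmall : ∀ i < k+2, ∀ j < k+2, i ≠ j → (c i ∩ c j).card ≤ 1 := by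
    have key : ∀ i j, i < j → j < k + 2 → (c i ∩ c j).card ≤ 1 := by
      intro i j hij hjl
      by_cases h1 : j = i + 1
      · have hc := hcons i (by omega)
        rw [h1]
        omega
      · by_cases h2 : i = 0 ∧ j = k + 1
        · rw [h2.1, h2.2, Finset.inter_comm]
          omega
        · rw [hdisjc i j hij hjl h1 h2]
          simp
    intro i hi j hj hij
    rcases Nat.lt_or_ge i j with h | h
    · exact key i j h hj
    · rw [Finset.inter_comm]
      exact key j i (by omega) hi
  have hdistinct : ∀ i < k+2, ∀ j < k+2, i ≠ j → c i ≠ c j := by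
    intro i hi j hj hij heq
    have h1 := hsmall i hi j hj hij
    rw [heq, Finset.inter_self] at h1
    have := hcard3 j hj
    omega
  apply hfree
  refine ⟨c, ⟨?_, ?_, ?_, ?_⟩, ?_, ?_⟩
  · intro i hi j hj hij
    exact hdistinct i (by omega) j (by omega) hij
  · intro i hi
    have := hcard3 i (by omega)
    omega
  · intro i hi
    rcases (by omega : i + 1 < l ∨ i + 1 = l) with h | h
    · rw [Nat.mod_eq_of_lt h]
      exact hcons i (by omega)
    · have hm : (i + 1) % l = 0 := by rw [h]; exact Nat.mod_self l
      have hik : i = k + 1 := by omega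
      rw [hm, hik]
      exact hwrap
  · intro i hi j hj hji hj1 hi1
    rcases Nat.lt_or_ge i j with h | h
    · refine hdisjc i j h (by omega) ?_ ?_
      · intro hc
        exact hj1 (by rw [Nat.mod_eq_of_lt (by omega : i + 1 < l)]; exact hc)
      · rintro ⟨hi0, hjk1⟩
        apply hi1
        have hl1 : j + 1 = l := by omega
        rw [hi0, hl1, Nat.mod_self]
    · rw [Finset.inter_comm]
      refine hdisjc j i (by omega) (by omega) ?_ ?_
      · intro hc
        exact hi1 (by rw [Nat.mod_eq_of_lt (by omega : j + 1 < l)]; exact hc)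
      · rintro ⟨hj0, hik1⟩
        apply hj1
        have hl1 : i + 1 = l := by omega
        rw [hj0, hl1, Nat.mod_self]
  · intro i hi
    exact hcard3 i (by omega)
  · intro i hi
    exact Finset.mem_coe.mpr (hcH i (by omega))
end

section
/- Let l ≥ 3 be an integer, let H be a 3-graph containing no 3-uniform loose cycle of length l, and let (X,Y) be an extender in H. Then X contains a subset Z with |Z| ≥ |X|/(l−2) that is independent in the reduced hypergraph H*. -/
open Finset

/-!
Let `K` be the family of edges of `H*` inside `X`; they have two or three vertices. `K` has no
simple path of length `l - 2`: such a path from `a` to `b` has at most `2l - 5` inner vertices,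
so the extender supplies a cherry from `a` to `b` avoiding them; each heavy pair of the path can
then be enlarged to an edge of `H` by a fresh vertex (it has `2l - 2` candidates), and the
enlarged path closed up by the cherry is a `C_l^3`.

A family of 2- and 3-sets without simple paths of length `k` has, in every vertex set `V`, an
independent set of at least `|V| / k` vertices. Take a longest path, of length `m < k`, and let
`W` be its vertex set, together with the closing edge if the path closes up to a cycle. Choosing
`A ⊆ W` among the ends of the path and, after rotating the cycle, a vertex of degree one in it
gives `|W| ≤ (m + 1) |A|`, and no edge meets `W` inside `A` only, since such an edge would prolong
the path. Then `A` together with an independent set in `V \ W` (by induction) is independent.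
-/

open Function

section

variable {α : Type*} [DecidableEq α] {l m n k i j : ℕ} {f g : ℕ → Finset α} {a b x y : α}
  {e p q F G : Finset α} {H K : Finset (Finset α)}

theorem eq_singleton_of_subset_pair {s : Finset α} (h : s ⊆ {a, b}) (ha : a ∈ s) (hb : b ∉ s) :
    s = {a} :=
  eq_singleton_iff_unique_mem.2 ⟨ha, fun _ hz =>
    (mem_insert.1 (h hz)).resolve_right fun hzb => hb (mem_singleton.1 hzb ▸ hz)⟩

def pathVerts (m : ℕ) (f : ℕ → Finset α) : Finset α := (range m).biUnion f

theorem mem_pathVerts : x ∈ pathVerts m f ↔ ∃ i < m, x ∈ f i := by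
  simp [pathVerts]

theorem subset_pathVerts (hi : i < m) : f i ⊆ pathVerts m f :=
  subset_biUnion_of_mem f (mem_range.2 hi)

theorem pathVerts_succ : pathVerts (m + 1) f = pathVerts m f ∪ f m := by
  rw [pathVerts, range_add_one, biUnion_insert, union_comm]
  rfl

theorem pathVerts_update_self :
    pathVerts (m + 1) (update f m e) = pathVerts m f ∪ e := by
  rw [pathVerts_succ, update_self]
  exact congrArg (· ∪ e) (biUnion_congr rfl fun i hi => update_of_ne (mem_range.1 hi).ne _ _)

theorem mem_update_insert :
    y ∈ update f i (insert x (f i)) j ↔ (j = i ∧ y = x) ∨ y ∈ f j := by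
  rcases eq_or_ne j i with rfl | hji
  · simp
  · simp [hji]

theorem pathVerts_update_insert (hi : i < m) :
    pathVerts m (update f i (insert x (f i))) = insert x (pathVerts m f) := by
  ext y
  simp only [mem_pathVerts, mem_update_insert, mem_insert]
  constructor
  · rintro ⟨j, hj, ⟨-, rfl⟩ | hy⟩
    exacts [Or.inl rfl, Or.inr ⟨j, hj, hy⟩]
  · rintro (rfl | ⟨j, hj, hy⟩)
    exacts [⟨i, hi, Or.inl ⟨rfl, rfl⟩⟩, ⟨j, hj, Or.inr hy⟩]

def consEdge (e : Finset α) (f : ℕ → Finset α) : ℕ → Finset α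
  | 0 => e
  | j + 1 => f j

def HasSimplePath (K : Finset (Finset α)) (m : ℕ) : Prop :=
  ∃ f : ℕ → Finset α, IsSimplePathOn m f ∧ ∀ i < m, f i ∈ K

namespace IsSimplePathOn

theorem mk' (hcard : ∀ i < m, 2 ≤ (f i).card)
    (hsucc : ∀ i, i + 1 < m → (f i ∩ f (i + 1)).card = 1)
    (hfar : ∀ i j, i + 1 < j → j < m → Disjoint (f i) (f j)) : IsSimplePathOn m f := by
  have hle : ∀ i j, i < j → j < m → (f i ∩ f j).card ≤ 1 := by
    intro i j hij hj
    rcases eq_or_ne j (i + 1) with rfl | hne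
    · exact (hsucc i hj).le
    · simp [disjoint_iff_inter_eq_empty.1 (hfar i j (by omega) hj)]
  refine ⟨hcard, fun i hi => card_pos.1 (by rw [hsucc i hi]; exact one_pos),
    fun i _ j hj hij hne => disjoint_iff_inter_eq_empty.1 (hfar i j (by omega) hj),
    fun i hi j hj hij => ?_⟩
  rcases hij.lt_or_gt with h | h
  · exact hle i j h hj
  · rw [inter_comm]; exact hle j i h hi

theorem mono (hf : IsSimplePathOn m f) (hnm : n ≤ m) : IsSimplePathOn n f :=
  ⟨fun i hi => hf.1 i (by omega), fun i hi => hf.2.1 i (by omega),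
    fun i _ j hj => hf.2.2.1 i (by omega) j (by omega),
    fun i _ j hj => hf.2.2.2 i (by omega) j (by omega)⟩

theorem card_inter_succ (hf : IsSimplePathOn m f) (hi : i + 1 < m) :
    (f i ∩ f (i + 1)).card = 1 :=
  le_antisymm (hf.2.2.2 i (by omega) (i + 1) hi (by omega)) (card_pos.2 (hf.2.1 i hi))

theorem disjoint_of_succ_lt (hf : IsSimplePathOn m f) (hij : i + 1 < j) (hj : j < m) :
    Disjoint (f i) (f j) :=
  disjoint_iff_inter_eq_empty.2 (hf.2.2.1 i (by omega) j hj (by omega) (by omega))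

theorem sdiff_nonempty (hf : IsSimplePathOn m f) (hi : i < m) (hj : j < m) (hij : i ≠ j) :
    (f i \ f j).Nonempty := by
  have := card_sdiff_add_card_inter (f i) (f j)
  have := hf.2.2.2 i hi j hj hij
  have := hf.1 i hi
  exact card_pos.1 (by omega)

theorem of_two_le_card (he : 2 ≤ (f 0).card) : IsSimplePathOn 1 f :=
  mk' (fun i hi => by rwa [Nat.lt_one_iff.1 hi]) (fun i hi => by omega) fun i j _ hj => by omega

theorem tail (hf : IsSimplePathOn (m + 1) f) : IsSimplePathOn m fun j => f (j + 1) :=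
  mk' (fun i _ => hf.1 _ (by omega)) (fun i _ => hf.card_inter_succ (by omega))
    fun i j hij hj => hf.disjoint_of_succ_lt (by omega) (by omega)

theorem cons (hf : IsSimplePathOn m f) (he : 2 ≤ e.card) (h₀ : (e ∩ f 0).card = 1)
    (hd : ∀ j, 1 ≤ j → j < m → Disjoint e (f j)) : IsSimplePathOn (m + 1) (consEdge e f) := by
  refine mk' ?_ ?_ ?_
  · rintro (_ | i) hi
    exacts [he, hf.1 i (by omega)]
  · rintro (_ | i) hi
    exacts [h₀, hf.card_inter_succ (by omega)]
  · rintro (_ | i) (_ | j) hij hj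
    · omega
    · exact hd j (by omega) (by omega)
    · omega
    · exact hf.disjoint_of_succ_lt (by omega) (by omega)

theorem snoc (hf : IsSimplePathOn m f) (he : 2 ≤ e.card) (hlast : (f (m - 1) ∩ e).card = 1)
    (hd : ∀ j, j + 1 < m → Disjoint (f j) e) : IsSimplePathOn (m + 1) (update f m e) := by
  have hlt : ∀ j < m, update f m e j = f j := fun j hj => update_of_ne hj.ne _ _
  refine mk' (fun i hi => ?_) (fun i hi => ?_) fun i j hij hj => ?_
  · rcases Nat.lt_succ_iff_lt_or_eq.1 hi with hi | rfl
    · rw [hlt i hi]; exact hf.1 i hi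
    · rwa [update_self]
  · rw [hlt i (by omega)]
    rcases Nat.lt_succ_iff_lt_or_eq.1 hi with hi | hi
    · rw [hlt _ hi]; exact hf.card_inter_succ hi
    · rw [hi, update_self, show i = m - 1 by omega]; exact hlast
  · rw [hlt i (by omega)]
    rcases Nat.lt_succ_iff_lt_or_eq.1 hj with hj | rfl
    · rw [hlt j hj]; exact hf.disjoint_of_succ_lt hij hj
    · rw [update_self]; exact hd i hij

theorem update_insert (hf : IsSimplePathOn m f) (hx : x ∉ pathVerts m f) :
    IsSimplePathOn m (update f i (insert x (f i))) := by
  have hx' : ∀ j < m, x ∉ f j := fun j hj hxj => hx (subset_pathVerts hj hxj)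
  have key : ∀ j k, j < m → k < m → j ≠ k →
      update f i (insert x (f i)) j ∩ update f i (insert x (f i)) k = f j ∩ f k := by
    intro j k hj hk hjk
    ext y
    simp only [mem_inter, mem_update_insert]
    constructor
    · rintro ⟨⟨hji, hyx⟩ | hyj, ⟨hki, hyx'⟩ | hyk⟩
      · omega
      · exact absurd (hyx ▸ hyk) (hx' k hk)
      · exact absurd (hyx' ▸ hyj) (hx' j hj)
      · exact ⟨hyj, hyk⟩
    · rintro ⟨hyj, hyk⟩
      exact ⟨Or.inr hyj, Or.inr hyk⟩
  refine mk' (fun j hj => (hf.1 j hj).trans (card_le_card fun y hy => ?_))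
    (fun j hj => by rw [key j (j + 1) (by omega) hj (by omega)]; exact hf.card_inter_succ hj)
    fun j k hjk hk => by
      rw [disjoint_iff_inter_eq_empty, key j k (by omega) hk (by omega)]
      exact disjoint_iff_inter_eq_empty.1 (hf.disjoint_of_succ_lt hjk hk)
  exact mem_update_insert.2 (Or.inr hy)

theorem length_le_card (hf : IsSimplePathOn m f) (hK : ∀ i < m, f i ∈ K) : m ≤ K.card := by
  have hinj : Set.InjOn f (range m : Set ℕ) := by
    intro i hi j hj hij
    by_contra hne
    have h1 := hf.2.2.2 i (mem_range.1 hi) j (mem_range.1 hj) hne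
    have h2 := hf.1 i (mem_range.1 hi)
    rw [hij, inter_self] at h1
    rw [hij] at h2
    omega
  simpa using card_le_card_of_injOn f (fun i hi => hK i (mem_range.1 hi)) hinj

theorem card_pathVerts_add_le (hf : IsSimplePathOn m f) :
    (pathVerts m f).card + m ≤ ∑ i ∈ range m, (f i).card + 1 := by
  induction m with
  | zero => simp [pathVerts]
  | succ m ih =>
    have hrec := ih (hf.mono m.le_succ)
    have hu := card_union_add_card_inter (pathVerts m f) (f m)
    rw [pathVerts_succ, sum_range_succ]
    rcases Nat.eq_zero_or_pos m with rfl | hm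
    · simp [pathVerts]
    · obtain ⟨z, hz⟩ := hf.2.1 (m - 1) (by omega)
      rw [mem_inter, Nat.sub_add_cancel hm] at hz
      have := card_pos.2
        ⟨z, mem_inter.2 ⟨subset_pathVerts (m := m) (i := m - 1) (by omega) hz.1, hz.2⟩⟩
      omega

theorem card_pathVerts_le {c : ℕ} (hf : IsSimplePathOn m f) (hc : ∀ i < m, (f i).card ≤ c) :
    (pathVerts m f).card + m ≤ c * m + 1 := by
  have := hf.card_pathVerts_add_le
  have := sum_le_card_nsmul (range m) (fun i => (f i).card) c fun i hi => hc i (mem_range.1 hi)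
  simp only [card_range, smul_eq_mul] at this
  linarith

end IsSimplePathOn

namespace SimplePathJoins

theorem eq_zero_of_mem (hf : SimplePathJoins m f a b) (hi : i < m) (ha : a ∈ f i) : i = 0 := by
  by_contra h0
  obtain ⟨hp, ha0, -, hend⟩ := hf
  rcases eq_or_ne i 1 with rfl | h1
  · exact (hend (by omega)).1 ha
  · exact disjoint_left.1 (hp.disjoint_of_succ_lt (show 0 + 1 < i by omega) hi) ha0 ha

theorem eq_pred_of_mem (hf : SimplePathJoins m f a b) (hi : i < m) (hb : b ∈ f i) :
    i = m - 1 := by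
  by_contra h
  obtain ⟨hp, -, hbm, hend⟩ := hf
  rcases eq_or_ne i (m - 2) with rfl | h2
  · exact (hend (by omega)).2 hb
  · exact disjoint_left.1 (hp.disjoint_of_succ_lt (show i + 1 < m - 1 by omega) (by omega)) hb hbm

theorem left_mem_pathVerts (hf : SimplePathJoins m f a b) (hm : 1 ≤ m) : a ∈ pathVerts m f :=
  subset_pathVerts hm hf.2.1

theorem right_mem_pathVerts (hf : SimplePathJoins m f a b) (hm : 1 ≤ m) :
    b ∈ pathVerts m f :=
  subset_pathVerts (by omega) hf.2.2.1

theorem isSimplePathOn_cons (hf : SimplePathJoins m f a b) (he : 2 ≤ e.card)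
    (hea : e ∩ pathVerts m f = {a}) : IsSimplePathOn (m + 1) (consEdge e f) := by
  obtain ⟨hae, hone⟩ := eq_singleton_iff_unique_mem.1 hea
  have honly : ∀ j < m, ∀ y ∈ e, y ∈ f j → y = a :=
    fun j hj y hy hyj => hone y (mem_inter.2 ⟨hy, subset_pathVerts hj hyj⟩)
  obtain ⟨i, hi, -⟩ := mem_pathVerts.1 (mem_inter.1 hae).2
  refine hf.1.cons he (card_eq_one.2 ⟨a, eq_singleton_iff_unique_mem.2
    ⟨mem_inter.2 ⟨(mem_inter.1 hae).1, hf.2.1⟩, fun y hy => honly 0 (by omega) y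
      (mem_inter.1 hy).1 (mem_inter.1 hy).2⟩⟩) fun j hj hjm => disjoint_left.2 fun y hy hyj => ?_
  have := hf.eq_zero_of_mem hjm (honly j hjm y hy hyj ▸ hyj)
  omega

theorem isSimplePathOn_snoc (hf : SimplePathJoins m f a b) (he : 2 ≤ e.card)
    (heb : e ∩ pathVerts m f = {b}) : IsSimplePathOn (m + 1) (update f m e) := by
  obtain ⟨hbe, hone⟩ := eq_singleton_iff_unique_mem.1 heb
  have honly : ∀ j < m, ∀ y ∈ e, y ∈ f j → y = b :=
    fun j hj y hy hyj => hone y (mem_inter.2 ⟨hy, subset_pathVerts hj hyj⟩)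
  obtain ⟨i, hi, -⟩ := mem_pathVerts.1 (mem_inter.1 hbe).2
  refine hf.1.snoc he (card_eq_one.2 ⟨b, eq_singleton_iff_unique_mem.2
    ⟨mem_inter.2 ⟨hf.2.2.1, (mem_inter.1 hbe).1⟩, fun y hy => honly (m - 1) (by omega) y
      (mem_inter.1 hy).2 (mem_inter.1 hy).1⟩⟩) fun j hj => disjoint_left.2 fun y hyj hy => ?_
  have := hf.eq_pred_of_mem (by omega) (honly j (by omega) y hy hyj ▸ hyj)
  omega

theorem update_insert (hf : SimplePathJoins m f a b) (hi : i < m) (hx : x ∉ pathVerts m f) :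
    SimplePathJoins m (update f i (insert x (f i))) a b := by
  have hxa : a ≠ x := fun h => hx (h ▸ hf.left_mem_pathVerts (by omega))
  have hxb : b ≠ x := fun h => hx (h ▸ hf.right_mem_pathVerts (by omega))
  refine ⟨hf.1.update_insert hx, mem_update_insert.2 (Or.inr hf.2.1),
    mem_update_insert.2 (Or.inr hf.2.2.1), fun h2 => ?_⟩
  simp only [mem_update_insert, hxa, hxb, and_false, false_or]
  exact hf.2.2.2 h2

end SimplePathJoins

theorem IsSimplePathOn.exists_simplePathJoins (hf : IsSimplePathOn m f) (hm : 1 ≤ m) :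
    ∃ a b, a ≠ b ∧ SimplePathJoins m f a b := by
  rcases Nat.lt_or_ge m 2 with hm2 | hm2
  · obtain rfl : m = 1 := by omega
    obtain ⟨a, ha, b, hb, hab⟩ := one_lt_card.1 (hf.1 0 one_pos)
    exact ⟨a, b, hab, hf, ha, hb, by omega⟩
  · obtain ⟨a, ha⟩ := hf.sdiff_nonempty (i := 0) (j := 1) (by omega) (by omega) (by omega)
    obtain ⟨b, hb⟩ := hf.sdiff_nonempty (i := m - 1) (j := m - 2) (by omega) (by omega) (by omega)
    rw [mem_sdiff] at ha hb
    have hj : SimplePathJoins m f a b := ⟨hf, ha.1, hb.1, fun _ => ⟨ha.2, hb.2⟩⟩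
    refine ⟨a, b, fun hab => ?_, hj⟩
    have := hj.eq_pred_of_mem (by omega) (hab ▸ ha.1)
    omega

namespace HasSimplePath

theorem mono (h : HasSimplePath K m) (hnm : n ≤ m) {K' : Finset (Finset α)} (hK : K ⊆ K') :
    HasSimplePath K' n :=
  let ⟨f, hf, hfK⟩ := h
  ⟨f, hf.mono hnm, fun i hi => hK (hfK i (by omega))⟩

theorem exists_maximal (hK : ∀ e ∈ K, 2 ≤ e.card) (hne : K.Nonempty) :
    ∃ m, 1 ≤ m ∧ HasSimplePath K m ∧ ¬HasSimplePath K (m + 1) := by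
  by_contra! hext
  have hall : ∀ n, HasSimplePath K (n + 1) := by
    intro n
    induction n with
    | zero =>
      obtain ⟨e, he⟩ := hne
      exact ⟨fun _ => e, IsSimplePathOn.of_two_le_card (hK e he), fun _ _ => he⟩
    | succ n ih => exact hext (n + 1) (by omega) ih
  obtain ⟨f, hf, hfK⟩ := hall K.card
  have := hf.length_le_card hfK
  omega

end HasSimplePath

theorem IsLooseCycleOn.mk' {l : ℕ} {g : ℕ → Finset α} (hcard : ∀ i < l, 2 ≤ (g i).card)
    (hsucc : ∀ i < l, (g i ∩ g ((i + 1) % l)).card = 1)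
    (hdisj : ∀ i < l, ∀ j < l, j ≠ i → j ≠ (i + 1) % l → i ≠ (j + 1) % l → g i ∩ g j = ∅) :
    IsLooseCycleOn l g := by
  refine ⟨fun i hi j hj hij heq => ?_, hcard, hsucc, hdisj⟩
  have h2 := hcard i hi
  by_cases h₁ : j = (i + 1) % l
  · have := hsucc i hi
    rw [← h₁, ← heq, inter_self] at this
    omega
  by_cases h₂ : i = (j + 1) % l
  · have := hsucc j hj
    rw [← h₂, heq, inter_self] at this
    rw [heq] at h2
    omega
  · have := hdisj i hi j hj (Ne.symm hij) h₁ h₂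
    rw [heq, inter_self] at this
    rw [heq, this] at h2
    simp at h2

def ClosesPath (m : ℕ) (f : ℕ → Finset α) (a b : α) (q : Finset α) : Prop :=
  SimplePathJoins m f a b ∧ a ≠ b ∧ q ∩ pathVerts m f = {a, b}

namespace ClosesPath

theorem left_mem (hc : ClosesPath m f a b q) : a ∈ q :=
  (mem_inter.1 (hc.2.2 ▸ mem_insert_self a {b})).1

theorem right_mem (hc : ClosesPath m f a b q) : b ∈ q :=
  (mem_inter.1 (hc.2.2 ▸ mem_insert_of_mem (mem_singleton_self b))).1

theorem mem_cases (hc : ClosesPath m f a b q) (hj : j < m) (hyq : y ∈ q) (hyj : y ∈ f j) :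
    (y = a ∧ j = 0) ∨ (y = b ∧ j = m - 1) := by
  have : y ∈ q ∩ pathVerts m f := mem_inter.2 ⟨hyq, subset_pathVerts hj hyj⟩
  rw [hc.2.2, mem_insert, mem_singleton] at this
  rcases this with rfl | rfl
  · exact Or.inl ⟨rfl, hc.1.eq_zero_of_mem hj hyj⟩
  · exact Or.inr ⟨rfl, hc.1.eq_pred_of_mem hj hyj⟩

theorem disjoint (hc : ClosesPath m f a b q) (hj : j < m) (h₀ : j ≠ 0) (h₁ : j ≠ m - 1) :
    Disjoint q (f j) :=
  disjoint_left.2 fun _ hyq hyj => by rcases hc.mem_cases hj hyq hyj with h | h <;> omega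

theorem inter_zero (hc : ClosesPath m f a b q) (hm : 2 ≤ m) : q ∩ f 0 = {a} := by
  refine eq_singleton_iff_unique_mem.2 ⟨mem_inter.2 ⟨hc.left_mem, hc.1.2.1⟩, fun y hy => ?_⟩
  rcases hc.mem_cases (by omega) (mem_inter.1 hy).1 (mem_inter.1 hy).2 with h | h
  exacts [h.1, by omega]

theorem inter_last (hc : ClosesPath m f a b q) (hm : 2 ≤ m) : f (m - 1) ∩ q = {b} := by
  refine eq_singleton_iff_unique_mem.2 ⟨mem_inter.2 ⟨hc.1.2.2.1, hc.right_mem⟩, fun y hy => ?_⟩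
  rcases hc.mem_cases (by omega) (mem_inter.1 hy).2 (mem_inter.1 hy).1 with h | h
  exacts [by omega, h.1]

theorem isLooseCycleOn (hc : ClosesPath m f a b q) (hm : 2 ≤ m) (hq : 2 ≤ q.card) :
    IsLooseCycleOn (m + 1) (update f m q) := by
  have hlt : ∀ j < m, update f m q j = f j := fun j hj => update_of_ne hj.ne _ _
  have hsucc : ∀ i < m, (i + 1) % (m + 1) = i + 1 := fun i hi => Nat.mod_eq_of_lt (by omega)
  have hpath := hc.1.1
  refine IsLooseCycleOn.mk' (fun i hi => ?_) (fun i hi => ?_) fun i hi j hj hji hj₁ hi₁ => ?_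
  · rcases Nat.lt_succ_iff_lt_or_eq.1 hi with hi | rfl
    · rw [hlt i hi]; exact hpath.1 i hi
    · rwa [update_self]
  · rcases Nat.lt_succ_iff_lt_or_eq.1 hi with hi | rfl
    · rw [hsucc i hi, hlt i hi]
      rcases Nat.lt_succ_iff_lt_or_eq.1 (show i + 1 < m + 1 by omega) with hi' | hi'
      · rw [hlt _ hi']; exact hpath.card_inter_succ hi'
      · rw [hi', update_self, show i = m - 1 by omega, hc.inter_last hm, card_singleton]
    · rw [Nat.mod_self, update_self, hlt 0 (by omega), hc.inter_zero hm, card_singleton]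
  rw [← disjoint_iff_inter_eq_empty]
  rcases Nat.lt_succ_iff_lt_or_eq.1 hi with hi' | rfl <;>
    rcases Nat.lt_succ_iff_lt_or_eq.1 hj with hj' | rfl
  · rw [hlt i hi', hlt j hj']
    rw [hsucc i hi'] at hj₁
    rw [hsucc j hj'] at hi₁
    rcases hji.lt_or_gt with h | h
    · exact (hpath.disjoint_of_succ_lt (by omega) hi').symm
    · exact hpath.disjoint_of_succ_lt (by omega) hj'
  · rw [hlt i hi', update_self]
    rw [hsucc i hi'] at hj₁
    rw [Nat.mod_self] at hi₁
    exact (hc.disjoint hi' hi₁ (by omega)).symm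
  · rw [hlt j hj', update_self]
    rw [hsucc j hj'] at hi₁
    rw [Nat.mod_self] at hj₁
    exact hc.disjoint hj' hj₁ (by omega)
  · exact absurd rfl hji

theorem isSimplePathOn_rotate (hc : ClosesPath m f a b q) (hm : 2 ≤ m) (hq : 2 ≤ q.card) :
    IsSimplePathOn m (update (fun j => f (j + 1)) (m - 1) q) := by
  obtain ⟨n, rfl⟩ : ∃ n, m = n + 1 := ⟨m - 1, by omega⟩
  rw [Nat.add_sub_cancel]
  refine hc.1.1.tail.snoc hq ?_ fun j hj => (hc.disjoint (j := j + 1) (by omega) (by omega)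
    (by omega)).symm
  rw [show n - 1 + 1 = n + 1 - 1 by omega, hc.inter_last hm, card_singleton]

theorem inter_pathVerts_rotate (hc : ClosesPath m f a b q) (hm : 2 ≤ m)
    (hx : f 0 ∩ f 1 = {x}) :
    f 0 ∩ pathVerts m (update (fun j => f (j + 1)) (m - 1) q) = {x, a} := by
  obtain ⟨n, rfl⟩ : ∃ n, m = n + 1 := ⟨m - 1, by omega⟩
  have hx01 := mem_inter.1 (hx ▸ mem_singleton_self x)
  rw [Nat.add_sub_cancel, pathVerts_update_self]
  ext y
  simp only [mem_inter, mem_union, mem_pathVerts, mem_insert, mem_singleton]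
  constructor
  · rintro ⟨hy0, ⟨j, hj, hyj⟩ | hyq⟩
    · rcases Nat.eq_zero_or_pos j with rfl | hj0
      · exact Or.inl (eq_singleton_iff_unique_mem.1 hx |>.2 y (mem_inter.2 ⟨hy0, hyj⟩))
      · exact absurd hyj (disjoint_left.1
          (hc.1.1.disjoint_of_succ_lt (i := 0) (by omega) (by omega)) hy0)
    · rcases hc.mem_cases (j := 0) (by omega) hyq hy0 with h | h
      exacts [Or.inr h.1, by omega]
  · rintro (rfl | rfl)
    · exact ⟨hx01.1, Or.inl ⟨0, by omega, hx01.2⟩⟩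
    · exact ⟨hc.1.2.1, Or.inr hc.left_mem⟩

-- `f 1, …, f (m - 1), q` is again a path, closed by `f 0`
theorem rotate (hc : ClosesPath m f a b q) (hm : 2 ≤ m) (hq : 2 ≤ q.card) :
    ∃ x, ClosesPath m (update (fun j => f (j + 1)) (m - 1) q) x a (f 0) := by
  obtain ⟨x, hx⟩ := card_eq_one.1 (hc.1.1.card_inter_succ (i := 0) (by omega))
  have hx01 := mem_inter.1 (hx ▸ mem_singleton_self x)
  have ha : ∀ j, 1 ≤ j → j < m → a ∉ f j := fun j hj hjm ha => by
    have := hc.1.eq_zero_of_mem hjm ha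
    omega
  have hg : ∀ j < m - 1, update (fun j => f (j + 1)) (m - 1) q j = f (j + 1) :=
    fun j hj => update_of_ne hj.ne _ _
  refine ⟨x, ⟨hc.isSimplePathOn_rotate hm hq, by rw [hg 0 (by omega)]; exact hx01.2,
    by rw [update_self]; exact hc.left_mem, fun _ => ⟨?_, ?_⟩⟩,
    fun hxa => ha 1 le_rfl (by omega) (hxa ▸ hx01.2), hc.inter_pathVerts_rotate hm hx⟩
  · rcases eq_or_lt_of_le hm with rfl | hm₃
    · rw [show 2 - 1 = 1 from rfl, update_self]
      intro hxq
      rcases hc.mem_cases (j := 1) (by omega) hxq hx01.2 with h | h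
      · omega
      · have := hc.1.eq_pred_of_mem (i := 0) (by omega) (h.1 ▸ hx01.1)
        omega
    · rw [hg 1 (by omega)]
      exact disjoint_left.1 (hc.1.1.disjoint_of_succ_lt (i := 0) (by omega) hm₃) hx01.1
  · rw [hg (m - 2) (by omega), show m - 2 + 1 = m - 1 by omega]
    exact ha _ (by omega) (by omega)

theorem isSimplePathOn_cons_cons (hc : ClosesPath m f a b q) (hm : 2 ≤ m) (hq : 2 ≤ q.card)
    (he : 2 ≤ e.card) (heq : (e ∩ q).card = 1) (heV : Disjoint e (pathVerts m f)) :
    IsSimplePathOn (m + 1) (consEdge e (consEdge q f)) := by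
  obtain ⟨n, rfl⟩ : ∃ n, m = n + 1 := ⟨m - 1, by omega⟩
  refine ((hc.1.1.mono n.le_succ).cons hq (by rw [hc.inter_zero hm, card_singleton])
    fun j _ _ => hc.disjoint (by omega) (by omega) (by omega)).cons he heq fun j hj₁ hjn => ?_
  obtain ⟨j, rfl⟩ : ∃ j', j = j' + 1 := ⟨j - 1, by omega⟩
  exact disjoint_of_subset_right (subset_pathVerts (m := n + 1) (i := j) (by omega)) heV

-- rotating `i + 1` times makes `f i` the closing edge
theorem exists_card_eq_three (hc : ClosesPath m f a b q) (hK : ∀ e ∈ K, 2 ≤ e.card)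
    (hm : 2 ≤ m) (hfK : ∀ j < m, f j ∈ K) (hqK : q ∈ K) (hi : i < m) (hi₃ : (f i).card = 3) :
    ∃ f' a' b' q', ClosesPath m f' a' b' q' ∧ (∀ j < m, f' j ∈ K) ∧ q' ∈ K ∧ q'.card = 3 := by
  have hrot : ∀ {f : ℕ → Finset α} {q}, (∀ j < m, f j ∈ K) → q ∈ K →
      ∀ j < m, update (fun j => f (j + 1)) (m - 1) q j ∈ K := by
    intro f q hfK hqK j hj
    rcases eq_or_ne j (m - 1) with rfl | hne
    · rwa [update_self]
    · rw [update_of_ne hne]; exact hfK _ (by omega)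
  induction i generalizing f a b q with
  | zero =>
    obtain ⟨x, hx⟩ := hc.rotate hm (hK q hqK)
    exact ⟨_, _, _, _, hx, hrot hfK hqK, hfK 0 hi, hi₃⟩
  | succ i ih =>
    obtain ⟨x, hx⟩ := hc.rotate hm (hK q hqK)
    exact ih hx (hrot hfK hqK) (hfK 0 (by omega)) (by omega) (by rwa [update_of_ne (by omega)])

end ClosesPath

def IsRemovable (K : Finset (Finset α)) (k : ℕ) (W A : Finset α) : Prop :=
  W.Nonempty ∧ W ⊆ K.biUnion id ∧ A ⊆ W ∧ W.card ≤ k * A.card ∧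
    ∀ e ∈ K, e ∩ W ⊆ A → Disjoint e W

theorem IsRemovable.mono {W A : Finset α} (h : IsRemovable K k W A) {k' : ℕ} (hk : k ≤ k') :
    IsRemovable K k' W A :=
  ⟨h.1, h.2.1, h.2.2.1, h.2.2.2.1.trans (Nat.mul_le_mul_right _ hk), h.2.2.2.2⟩

theorem exists_indep_of_forall_isRemovable (hk : 1 ≤ k)
    (hK : ∀ K' ⊆ K, K'.Nonempty → ∃ W A, IsRemovable K' k W A) (V : Finset α) :
    ∃ Z ⊆ V, (∀ e ∈ K, ¬e ⊆ Z) ∧ V.card ≤ k * Z.card := by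
  induction V using Finset.strongInduction with
  | H V ih =>
  by_cases hKV : (K.filter (· ⊆ V)).Nonempty
  swap
  · exact ⟨V, Subset.rfl, fun e he heV => hKV ⟨e, mem_filter.2 ⟨he, heV⟩⟩,
      Nat.le_mul_of_pos_left _ hk⟩
  obtain ⟨W, A, hWne, hWK, hAW, hcard, hW⟩ := hK _ (filter_subset _ _) hKV
  have hWV : W ⊆ V := fun x hx => by
    obtain ⟨e, he, hxe⟩ := mem_biUnion.1 (hWK hx)
    exact (mem_filter.1 he).2 hxe
  obtain ⟨Z, hZ, hZind, hZcard⟩ := ih (V \ W) (sdiff_ssubset hWV hWne)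
  have hZW : Disjoint Z W := disjoint_of_subset_left hZ sdiff_disjoint
  have hAZV : A ∪ Z ⊆ V := union_subset (hAW.trans hWV) (hZ.trans sdiff_subset)
  refine ⟨A ∪ Z, hAZV, fun e he heAZ => ?_, ?_⟩
  · have heW : Disjoint e W := hW e (mem_filter.2 ⟨he, heAZ.trans hAZV⟩) fun x hx =>
      (mem_union.1 (heAZ (mem_inter.1 hx).1)).resolve_right
        fun hxZ => disjoint_left.1 hZW hxZ (mem_inter.1 hx).2
    exact hZind e he fun x hx => (mem_union.1 (heAZ hx)).resolve_left
      fun hxA => disjoint_left.1 heW hx (hAW hxA)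
  · have hV := card_sdiff_add_card_inter V W
    rw [inter_eq_right.2 hWV] at hV
    rw [card_union_of_disjoint (disjoint_of_subset_left hAW hZW.symm), Nat.mul_add]
    linarith

theorem isRemovable_union (h₁ : ∀ p ∈ K, ∀ q ∈ K, (p ∩ q).card ≠ 1) (hp : p ∈ K) (hq : q ∈ K)
    (hp₃ : p.card ≤ 3) (hq₃ : q.card ≤ 3) (h₂ : 2 ≤ (p ∩ q).card) {s : α} (hsq : s ∈ q) (hsp : s ∉ p) (hy : y ∈ p) :
    IsRemovable K 2 (p ∪ q) {s, y} := by
  have hsy : s ≠ y := fun h => hsp (h ▸ hy)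
  refine ⟨⟨y, mem_union_left _ hy⟩,
    union_subset (subset_biUnion_of_mem id hp) (subset_biUnion_of_mem id hq),
    insert_subset_iff.2 ⟨mem_union_right _ hsq, singleton_subset_iff.2 (mem_union_left _ hy)⟩,
    ?_, fun e he heW => ?_⟩
  · have := card_union_add_card_inter p q
    rw [card_pair hsy]
    omega
  have hye : y ∉ e := fun hye => h₁ e he p hp (card_eq_one.2 ⟨y, eq_singleton_of_subset_pair
    (pair_comm s y ▸ (inter_subset_inter_left subset_union_left).trans heW)
    (mem_inter.2 ⟨hye, hy⟩) fun h => hsp (mem_inter.1 h).2⟩)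
  have hse : s ∉ e := fun hse => h₁ e he q hq (card_eq_one.2 ⟨s, eq_singleton_of_subset_pair
    ((inter_subset_inter_left subset_union_right).trans heW)
    (mem_inter.2 ⟨hse, hsq⟩) fun h => hye (mem_inter.1 h).1⟩)
  exact disjoint_left.2 fun z hze hzW => by
    rcases mem_insert.1 (heW (mem_inter.2 ⟨hze, hzW⟩)) with rfl | hz
    exacts [hse hze, hye (mem_singleton.1 hz ▸ hze)]

theorem isRemovable_erase (he₂ : 2 ≤ e.card) (he : e ∈ K) (hx : x ∈ e)
    (hsub : ∀ e' ∈ K, ¬Disjoint e' e → e ⊆ e') : IsRemovable K 2 e (e.erase x) := by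
  refine ⟨⟨x, hx⟩, subset_biUnion_of_mem id he, erase_subset x e, ?_, fun e' he' he'e => ?_⟩
  · rw [card_erase_of_mem hx]
    omega
  · by_contra hdis
    exact (mem_erase.1 (he'e (mem_inter.2 ⟨hsub e' he' hdis hx, hx⟩))).1 rfl

theorem exists_isRemovable_of_card_inter_ne_one (hK : ∀ e ∈ K, 2 ≤ e.card ∧ e.card ≤ 3)
    (hne : K.Nonempty) (h₁ : ∀ p ∈ K, ∀ q ∈ K, (p ∩ q).card ≠ 1) :
    ∃ W A, IsRemovable K 2 W A := by
  by_cases h : ∃ p ∈ K, ∃ q ∈ K, 2 ≤ (p ∩ q).card ∧ ¬q ⊆ p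
  · obtain ⟨p, hp, q, hq, h₂, hqp⟩ := h
    obtain ⟨s, hsq, hsp⟩ := not_subset.1 hqp
    obtain ⟨y, hy⟩ := card_pos.1 (by have := (hK p hp).1; omega : 0 < p.card)
    exact ⟨_, _, isRemovable_union h₁ hp hq (hK p hp).2 (hK q hq).2 h₂ hsq hsp hy⟩
  · push Not at h
    obtain ⟨e, he⟩ := hne
    obtain ⟨x, hx⟩ := card_pos.1 (by have := (hK e he).1; omega : 0 < e.card)
    refine ⟨_, _, isRemovable_erase (hK e he).1 he hx fun e' he' hdis => h e' he' e he ?_⟩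
    have := card_pos.2 (not_disjoint_iff_nonempty_inter.1 hdis)
    have := h₁ e' he' e he
    omega

theorem pathVerts_subset_biUnion (hfK : ∀ j < m, f j ∈ K) : pathVerts m f ⊆ K.biUnion id :=
  fun x hx => by
    obtain ⟨j, hj, hxj⟩ := mem_pathVerts.1 hx
    exact mem_biUnion.2 ⟨f j, hfK j hj, hxj⟩

namespace SimplePathJoins

variable (hf : SimplePathJoins m f a b) (hfK : ∀ j < m, f j ∈ K)
  (hmax : ¬HasSimplePath K (m + 1))
include hf hfK hmax

theorem inter_ne_left (he : e ∈ K) (he₂ : 2 ≤ e.card) : e ∩ pathVerts m f ≠ {a} := fun hea =>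
  hmax ⟨_, hf.isSimplePathOn_cons he₂ hea, fun i hi => by
    rcases i with _ | i
    exacts [he, hfK i (by omega)]⟩

theorem inter_ne_right (he : e ∈ K) (he₂ : 2 ≤ e.card) : e ∩ pathVerts m f ≠ {b} := fun heb =>
  hmax ⟨_, hf.isSimplePathOn_snoc he₂ heb, fun i hi => by
    rcases Nat.lt_succ_iff_lt_or_eq.1 hi with hi | rfl
    · rw [update_of_ne hi.ne]; exact hfK i hi
    · rwa [update_self]⟩

theorem isRemovable_singleton (hm : 1 ≤ m) (hK : ∀ e ∈ K, 2 ≤ e.card)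
    (h₂ : ∀ j < m, (f j).card = 2) : IsRemovable K (m + 1) (pathVerts m f) {a} := by
  have hV := hf.1.card_pathVerts_le fun j hj => (h₂ j hj).le
  refine ⟨⟨a, hf.left_mem_pathVerts hm⟩, pathVerts_subset_biUnion hfK,
    singleton_subset_iff.2 (hf.left_mem_pathVerts hm), by rw [card_singleton]; omega,
    fun e he hsub => ?_⟩
  rcases subset_singleton_iff.1 hsub with h | h
  · exact disjoint_iff_inter_eq_empty.2 h
  · exact absurd h (hf.inter_ne_left hfK hmax he (hK e he))

theorem isRemovable_pair (hab : a ≠ b) (hm : 1 ≤ m) (hK : ∀ e ∈ K, 2 ≤ e.card ∧ e.card ≤ 3)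
    (hclose : ∀ q ∈ K, q ∩ pathVerts m f ≠ {a, b}) :
    IsRemovable K (m + 1) (pathVerts m f) {a, b} := by
  have hV := hf.1.card_pathVerts_le fun j hj => (hK _ (hfK j hj)).2
  have haV := hf.left_mem_pathVerts hm
  have hbV := hf.right_mem_pathVerts hm
  refine ⟨⟨a, haV⟩, pathVerts_subset_biUnion hfK,
    insert_subset_iff.2 ⟨haV, singleton_subset_iff.2 hbV⟩, by rw [card_pair hab]; omega,
    fun e he hsub => ?_⟩
  by_cases ha : a ∈ e <;> by_cases hb : b ∈ e
  · exact absurd (Subset.antisymm hsub (insert_subset (mem_inter.2 ⟨ha, haV⟩)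
      (singleton_subset_iff.2 (mem_inter.2 ⟨hb, hbV⟩)))) (hclose e he)
  · exact absurd (eq_singleton_of_subset_pair hsub (mem_inter.2 ⟨ha, haV⟩)
      fun h => hb (mem_inter.1 h).1) (hf.inter_ne_left hfK hmax he (hK e he).1)
  · exact absurd (eq_singleton_of_subset_pair (pair_comm a b ▸ hsub) (mem_inter.2 ⟨hb, hbV⟩)
      fun h => ha (mem_inter.1 h).1) (hf.inter_ne_right hfK hmax he (hK e he).1)
  · exact disjoint_left.2 fun z hze hzV => by
      rcases mem_insert.1 (hsub (mem_inter.2 ⟨hze, hzV⟩)) with rfl | hz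
      exacts [ha hze, hb (mem_singleton.1 hz ▸ hze)]

end SimplePathJoins

theorem ClosesPath.exists_isRemovable (hc : ClosesPath m f a b q) (hm : 2 ≤ m)
    (hK : ∀ e ∈ K, 2 ≤ e.card ∧ e.card ≤ 3) (hfK : ∀ j < m, f j ∈ K) (hqK : q ∈ K)
    (hq₃ : q.card = 3) (hmax : ¬HasSimplePath K (m + 1)) :
    ∃ w, IsRemovable K (m + 1) (pathVerts m f ∪ q) {a, w} := by
  have haV := hc.1.left_mem_pathVerts (by omega)
  obtain ⟨w, hw⟩ : (q \ pathVerts m f).Nonempty := by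
    have := card_sdiff_add_card_inter q (pathVerts m f)
    rw [hc.2.2, card_pair hc.2.1] at this
    exact card_pos.1 (by omega)
  rw [mem_sdiff] at hw
  have hwa : a ≠ w := fun h => hw.2 (h ▸ haV)
  refine ⟨w, ⟨a, mem_union_left _ haV⟩,
    union_subset (pathVerts_subset_biUnion hfK) (subset_biUnion_of_mem id hqK),
    insert_subset_iff.2 ⟨mem_union_left _ haV, singleton_subset_iff.2 (mem_union_right _ hw.1)⟩,
    ?_, fun e he hsub => ?_⟩
  · have := card_union_add_card_inter (pathVerts m f) q
    have := hc.1.1.card_pathVerts_le fun j hj => (hK _ (hfK j hj)).2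
    rw [inter_comm, hc.2.2, card_pair hc.2.1] at *
    rw [card_pair hwa]
    omega
  have hae : a ∉ e := fun hae => hc.1.inter_ne_left hfK hmax he (hK e he).1
    (eq_singleton_of_subset_pair ((inter_subset_inter_left subset_union_left).trans hsub)
      (mem_inter.2 ⟨hae, haV⟩) fun h => hw.2 (mem_inter.1 h).2)
  have hwe : w ∉ e := fun hwe => by
    have heV : Disjoint e (pathVerts m f) := disjoint_left.2 fun z hze hzV => by
      rcases mem_insert.1 (hsub (mem_inter.2 ⟨hze, mem_union_left _ hzV⟩)) with rfl | hz
      exacts [hae hze, hw.2 (mem_singleton.1 hz ▸ hzV)]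
    have heq : e ∩ q = {w} := eq_singleton_of_subset_pair
      (pair_comm a w ▸ (inter_subset_inter_left subset_union_right).trans hsub)
      (mem_inter.2 ⟨hwe, hw.1⟩) fun h => hae (mem_inter.1 h).1
    refine hmax ⟨_, hc.isSimplePathOn_cons_cons hm (hK q hqK).1 (hK e he).1
      (by rw [heq, card_singleton]) heV, fun i hi => ?_⟩
    rcases i with _ | _ | i
    exacts [he, hqK, hfK i (by omega)]
  exact disjoint_left.2 fun z hze hzW => by
    rcases mem_insert.1 (hsub (mem_inter.2 ⟨hze, hzW⟩)) with rfl | hz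
    exacts [hae hze, hwe (mem_singleton.1 hz ▸ hze)]

theorem exists_isRemovable_of_maximal (hK : ∀ e ∈ K, 2 ≤ e.card ∧ e.card ≤ 3) (hm : 1 ≤ m)
    (hpath : HasSimplePath K m) (hmax : ¬HasSimplePath K (m + 1)) :
    ∃ W A, IsRemovable K (m + 1) W A := by
  obtain ⟨f, hf, hfK⟩ := hpath
  obtain rfl | hm₂ : m = 1 ∨ 2 ≤ m := by omega
  · refine exists_isRemovable_of_card_inter_ne_one hK ⟨f 0, hfK 0 one_pos⟩
      fun p hp q hq hpq => hmax ⟨consEdge p fun _ => q,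
        (IsSimplePathOn.of_two_le_card (hK q hq).1).cons (hK p hp).1 hpq fun j hj hj' => by omega,
        fun i hi => ?_⟩
    rcases i with _ | _ | i
    exacts [hp, hq, by omega]
  obtain ⟨a, b, hab, hj⟩ := hf.exists_simplePathJoins hm
  by_cases hclose : ∃ q ∈ K, q ∩ pathVerts m f = {a, b}
  · obtain ⟨q, hqK, hq⟩ := hclose
    have hc : ClosesPath m f a b q := ⟨hj, hab, hq⟩
    by_cases hq₃ : q.card = 3
    · obtain ⟨w, hw⟩ := hc.exists_isRemovable hm₂ hK hfK hqK hq₃ hmax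
      exact ⟨_, _, hw⟩
    by_cases hp₃ : ∃ p < m, (f p).card = 3
    · obtain ⟨p, hp, hp₃⟩ := hp₃
      obtain ⟨f', a', b', q', hc', hf'K, hq'K, hq'₃⟩ :=
        hc.exists_card_eq_three (fun e he => (hK e he).1) hm₂ hfK hqK hp hp₃
      obtain ⟨w, hw⟩ := hc'.exists_isRemovable hm₂ hK hf'K hq'K hq'₃ hmax
      exact ⟨_, _, hw⟩
    · push Not at hp₃
      refine ⟨_, _, hj.isRemovable_singleton hfK hmax hm (fun e he => (hK e he).1)
        fun j hj => ?_⟩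
      have := hK _ (hfK j hj)
      have := hp₃ j hj
      omega
  · push Not at hclose
    exact ⟨_, _, hj.isRemovable_pair hfK hmax hab hm hK hclose⟩

theorem exists_indep_of_not_hasSimplePath (hK : ∀ e ∈ K, 2 ≤ e.card ∧ e.card ≤ 3) (hk : 1 ≤ k)
    (hnp : ¬HasSimplePath K k) (V : Finset α) :
    ∃ Z ⊆ V, (∀ e ∈ K, ¬e ⊆ Z) ∧ V.card ≤ k * Z.card := by
  refine exists_indep_of_forall_isRemovable hk (fun K' hK' hne => ?_) V
  have hK'₃ : ∀ e ∈ K', 2 ≤ e.card ∧ e.card ≤ 3 := fun e he => hK e (hK' he)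
  obtain ⟨m, hm, hpath, hmax⟩ := HasSimplePath.exists_maximal (fun e he => (hK'₃ e he).1) hne
  have hmk : m + 1 ≤ k := by
    by_contra! h
    exact hnp (hpath.mono (by omega) hK')
  obtain ⟨W, A, hWA⟩ := exists_isRemovable_of_maximal hK'₃ hm hpath hmax
  exact ⟨W, A, hWA.mono hmk⟩

theorem mem_or_pairHeavy_of_mem_reduced (he : e ∈ Reduced l H) : e ∈ H ∨ PairHeavy l H e := by
  rcases he with h | h
  exacts [Or.inl h.1, Or.inr h]

theorem card_of_mem_reduced (h3 : ∀ e ∈ H, e.card = 3) (he : e ∈ Reduced l H) :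
    2 ≤ e.card ∧ e.card ≤ 3 := by
  rcases mem_or_pairHeavy_of_mem_reduced he with h | h
  · have := h3 e h
    omega
  · have := h.1
    omega

theorem PairHeavy.exists_insert_mem (h3 : ∀ e ∈ H, e.card = 3) (hp : PairHeavy l H p)
    (hF : F.card < 2 * l - 2) : ∃ x ∉ F, x ∉ p ∧ insert x p ∈ H := by
  by_contra! hcon
  have hsub : H.filter (fun e => p ⊆ e) ⊆ F.image (insert · p) := by
    intro e he
    obtain ⟨heH, hpe⟩ := mem_filter.1 he
    obtain ⟨x, hx⟩ := card_eq_one.1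
      (show (e \ p).card = 1 by rw [card_sdiff_of_subset hpe, h3 e heH, hp.1])
    have hxe : x ∈ e \ p := hx ▸ mem_singleton_self x
    have hex : insert x p = e := by rw [insert_eq, ← hx, sdiff_union_of_subset hpe]
    rw [mem_sdiff] at hxe
    exact mem_image.2 ⟨x, by_contra fun hxF => hcon x hxF hxe.2 (hex ▸ heH), hex⟩
  have := (card_le_card hsub).trans card_image_le
  have := hp.2
  omega

theorem SimplePathJoins.exists_insert_mem (h3 : ∀ e ∈ H, e.card = 3) (hml : m + 2 ≤ l)
    (hG : (G \ {a, b}).card ≤ 3) (hf : SimplePathJoins m f a b)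
    (hfH : ∀ j < m, f j ∈ H ∨ PairHeavy l H (f j)) (hi : i < m) (hp : PairHeavy l H (f i)) :
    ∃ x ∉ pathVerts m f, x ∉ G ∧ insert x (f i) ∈ H := by
  -- `f i` has only two vertices, so the path has at most `2m` vertices
  have hsum : ∑ j ∈ range m, (f j).card < ∑ j ∈ range m, 3 :=
    sum_lt_sum (fun j hj => (hfH j (mem_range.1 hj)).elim (fun h => (h3 _ h).le)
      fun h => by rw [h.1]; norm_num) ⟨i, mem_range.2 hi, by rw [hp.1]; norm_num⟩
  rw [sum_const, card_range, smul_eq_mul] at hsum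
  have hV := hf.1.card_pathVerts_add_le
  have hF : ((pathVerts m f \ f i) ∪ (G \ {a, b})).card < 2 * l - 2 := by
    have := card_union_le (pathVerts m f \ f i) (G \ {a, b})
    rw [card_sdiff_of_subset (subset_pathVerts hi), hp.1] at this
    omega
  obtain ⟨x, hxF, hxi, hxH⟩ := hp.exists_insert_mem h3 hF
  have hxV : x ∉ pathVerts m f := fun hxV => hxF (mem_union_left _ (mem_sdiff.2 ⟨hxV, hxi⟩))
  refine ⟨x, hxV, fun hxG => hxF (mem_union_right _ (mem_sdiff.2 ⟨hxG, ?_⟩)), hxH⟩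
  rw [mem_insert, mem_singleton]
  rintro (rfl | rfl)
  exacts [hxV (hf.left_mem_pathVerts (by omega)), hxV (hf.right_mem_pathVerts (by omega))]

theorem SimplePathJoins.exists_mem_of_pairHeavy (h3 : ∀ e ∈ H, e.card = 3) (hml : m + 2 ≤ l)
    (hG : (G \ {a, b}).card ≤ 3) (hf : SimplePathJoins m f a b)
    (hfH : ∀ i < m, f i ∈ H ∨ PairHeavy l H (f i)) (hfG : G ∩ pathVerts m f ⊆ {a, b}) :
    ∃ f', SimplePathJoins m f' a b ∧ (∀ i < m, f' i ∈ H) ∧ G ∩ pathVerts m f' ⊆ {a, b} := by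
  suffices key : ∀ n, ∀ f : ℕ → Finset α, ((range m).filter fun i => f i ∉ H).card ≤ n →
      SimplePathJoins m f a b → (∀ i < m, f i ∈ H ∨ PairHeavy l H (f i)) →
      G ∩ pathVerts m f ⊆ {a, b} →
      ∃ f', SimplePathJoins m f' a b ∧ (∀ i < m, f' i ∈ H) ∧ G ∩ pathVerts m f' ⊆ {a, b} from
    key _ f le_rfl hf hfH hfG
  intro n
  induction n with
  | zero =>
    intro f hn hf _ hfG
    refine ⟨f, hf, fun i hi => ?_, hfG⟩
    by_contra hiH
    have : 0 < ((range m).filter fun i => f i ∉ H).card :=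
      card_pos.2 ⟨i, mem_filter.2 ⟨mem_range.2 hi, hiH⟩⟩
    omega
  | succ n ih =>
    intro f hn hf hfH hfG
    by_cases hall : ∀ i < m, f i ∈ H
    · exact ⟨f, hf, hall, hfG⟩
    push Not at hall
    obtain ⟨i, hi, hiH⟩ := hall
    obtain ⟨x, hxV, hxG, hxH⟩ :=
      hf.exists_insert_mem h3 hml hG hfH hi ((hfH i hi).resolve_left hiH)
    have hiF : i ∈ (range m).filter fun i => f i ∉ H := mem_filter.2 ⟨mem_range.2 hi, hiH⟩
    refine ih (update f i (insert x (f i))) ?_ (hf.update_insert hi hxV) (fun j hj => ?_) ?_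
    · refine (card_le_card fun j hj => ?_).trans ((card_erase_of_mem hiF).le.trans (by omega))
      rw [mem_filter] at hj
      have hji : j ≠ i := by rintro rfl; rw [update_self] at hj; exact hj.2 hxH
      rw [update_of_ne hji] at hj
      exact mem_erase.2 ⟨hji, mem_filter.2 hj⟩
    · rcases eq_or_ne j i with rfl | hji
      · rw [update_self]; exact Or.inl hxH
      · rw [update_of_ne hji]; exact hfH j hj
    · rwa [pathVerts_update_insert hi, inter_insert_of_notMem hxG]

theorem SimplePathJoins.card_union_sdiff (hg : SimplePathJoins 2 g a b) (hab : a ≠ b)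
    (h₀ : (g 0).card = 3) (h₁ : (g 1).card = 3) : ((g 0 ∪ g 1) \ {a, b}).card = 3 := by
  have hbg : b ∈ g 1 := hg.2.2.1
  have := card_union_add_card_inter (g 0) (g 1)
  rw [hg.1.card_inter_succ (i := 0) one_lt_two, h₀, h₁] at this
  rw [card_sdiff_of_subset (insert_subset_iff.2 ⟨mem_union_left _ hg.2.1,
    singleton_subset_iff.2 (mem_union_right _ hbg)⟩), card_pair hab]
  omega

theorem SimplePathJoins.isLooseCycleOn_of_cherry (hf : SimplePathJoins m f a b) (hm : 1 ≤ m)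
    (hg : SimplePathJoins 2 g a b) (hfg : (g 0 ∪ g 1) ∩ pathVerts m f ⊆ {a, b}) :
    IsLooseCycleOn (m + 2) (update (update f m (g 1)) (m + 1) (g 0)) := by
  obtain ⟨y, hy⟩ := card_eq_one.1 (hg.1.card_inter_succ (i := 0) one_lt_two)
  have hy01 : y ∈ g 0 ∩ g 1 := hy ▸ mem_singleton_self y
  rw [mem_inter] at hy01
  obtain ⟨ha1, hb0⟩ : a ∉ g 1 ∧ b ∉ g 0 := hg.2.2.2 le_rfl
  have h₁ : g 1 ∩ pathVerts m f = {b} := eq_singleton_of_subset_pair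
    (pair_comm a b ▸ (inter_subset_inter_right subset_union_right).trans hfg)
    (mem_inter.2 ⟨hg.2.2.1, hf.right_mem_pathVerts hm⟩) fun h => ha1 (mem_inter.1 h).1
  have h₀ : g 0 ∩ pathVerts m f = {a} := eq_singleton_of_subset_pair
    ((inter_subset_inter_right subset_union_left).trans hfg)
    (mem_inter.2 ⟨hg.2.1, hf.left_mem_pathVerts hm⟩) fun h => hb0 (mem_inter.1 h).1
  have hlt : ∀ j < m, update f m (g 1) j = f j := fun j hj => update_of_ne hj.ne _ _
  have hP : SimplePathJoins (m + 1) (update f m (g 1)) a y := by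
    refine ⟨hf.isSimplePathOn_snoc (hg.1.1 1 one_lt_two) h₁, by rw [hlt 0 hm]; exact hf.2.1,
      by simpa using hy01.2, fun _ => ⟨?_, ?_⟩⟩
    · rcases eq_or_lt_of_le hm with rfl | hm₂
      · simpa using ha1
      · rw [hlt 1 hm₂]
        intro ha
        have := hf.eq_zero_of_mem hm₂ ha
        omega
    · rw [show m + 1 - 2 = m - 1 by omega, hlt _ (by omega)]
      intro hyf
      rcases mem_insert.1 (hfg (mem_inter.2 ⟨mem_union_right _ hy01.2,
        subset_pathVerts (by omega) hyf⟩)) with rfl | hy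
      exacts [ha1 hy01.2, hb0 (mem_singleton.1 hy ▸ hy01.1)]
  have hc : ClosesPath (m + 1) (update f m (g 1)) a y (g 0) := by
    refine ⟨hP, fun h => ha1 (h ▸ hy01.2), ?_⟩
    rw [pathVerts_update_self, inter_union_distrib_left, h₀, hy, insert_eq]
  exact hc.isLooseCycleOn (by omega) (hg.1.1 0 two_pos)

theorem SimplePathJoins.containsUniformLooseCycle (h3 : ∀ e ∈ H, e.card = 3)
    (hf : SimplePathJoins m f a b) (hm : 1 ≤ m) (hfH : ∀ i < m, f i ∈ H)
    (hg : SimplePathJoins 2 g a b) (hgH : ∀ i < 2, g i ∈ H)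
    (hfg : (g 0 ∪ g 1) ∩ pathVerts m f ⊆ {a, b}) :
    ContainsUniformLooseCycle 3 (m + 2) (↑H : Set (Finset α)) := by
  have hmem : ∀ i < m + 2, update (update f m (g 1)) (m + 1) (g 0) i ∈ H := by
    intro i hi
    rcases (show i < m ∨ i = m ∨ i = m + 1 by omega) with hi | rfl | rfl
    · rw [update_of_ne (by omega), update_of_ne (by omega)]; exact hfH i hi
    · rw [update_of_ne (by omega), update_self]; exact hgH 1 one_lt_two
    · rw [update_self]; exact hgH 0 two_pos
  exact ⟨_, hf.isLooseCycleOn_of_cherry hm hg hfg, fun i hi => h3 _ (hmem i hi), hmem⟩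

theorem IsExtender.not_hasSimplePath (hl : 3 ≤ l) (h3 : ∀ e ∈ H, e.card = 3)
    (hfree : ¬ContainsUniformLooseCycle 3 l (↑H : Set (Finset α))) {X Y : Finset α}
    (hXY : IsExtender l H X Y) (hK : ∀ e ∈ K, e ⊆ X ∧ e ∈ Reduced l H) :
    ¬HasSimplePath K (l - 2) := by
  obtain ⟨k, rfl⟩ : ∃ k, l = k + 2 := ⟨l - 2, by omega⟩
  rw [Nat.add_sub_cancel]
  rintro ⟨f, hf, hfK⟩
  obtain ⟨a, b, hab, hj⟩ := hf.exists_simplePathJoins (by omega)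
  have hfH : ∀ i < k, f i ∈ H ∨ PairHeavy (k + 2) H (f i) :=
    fun i hi => mem_or_pairHeavy_of_mem_reduced (hK _ (hfK i hi)).2
  have hV := hf.card_pathVerts_le fun i hi => (card_of_mem_reduced h3 (hK _ (hfK i hi)).2).2
  have hVX : pathVerts k f ⊆ X := fun x hx => by
    obtain ⟨i, hi, hxi⟩ := mem_pathVerts.1 hx
    exact (hK _ (hfK i hi)).1 hxi
  have haV := hj.left_mem_pathVerts (by omega)
  have hbV := hj.right_mem_pathVerts (by omega)
  obtain ⟨g, hg, hgH, hgS⟩ := hXY.2.2 a (hVX haV) b (hVX hbV) hab (pathVerts k f \ {a, b})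
    (disjoint_union_right.2 ⟨sdiff_disjoint,
      disjoint_of_subset_left (sdiff_subset.trans hVX) hXY.1⟩)
    (by rw [card_sdiff_of_subset (insert_subset_iff.2 ⟨haV, singleton_subset_iff.2 hbV⟩),
      card_pair hab]; omega)
  have hgV : (g 0 ∪ g 1) ∩ pathVerts k f ⊆ {a, b} := fun z hz => by
    by_contra hzab
    rw [mem_inter, mem_union] at hz
    exact hz.1.elim (disjoint_left.1 (hgS 0 two_pos) · (mem_sdiff.2 ⟨hz.2, hzab⟩))
      (disjoint_left.1 (hgS 1 one_lt_two) · (mem_sdiff.2 ⟨hz.2, hzab⟩))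
  obtain ⟨f', hf', hf'H, hf'G⟩ := hj.exists_mem_of_pairHeavy h3 le_rfl
    (hg.card_union_sdiff hab (h3 _ (hgH 0 two_pos)) (h3 _ (hgH 1 one_lt_two))).le hfH hgV
  exact hfree (hf'.containsUniformLooseCycle h3 (by omega) hf'H hg hgH hf'G)

end

/-- If `(X, Y)` is an extender in a `C_l^3`-free 3-graph `H` then `X` contains a
subset `Z` of size at least `|X| / (l - 2)` which is independent in `H*`. -/
theorem extender_independent_subset {α : Type*} [DecidableEq α] (l : ℕ) (hl : 3 ≤ l)
    (H : Finset (Finset α)) (h3 : ∀ e ∈ H, e.card = 3)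
    (hfree : ¬ ContainsUniformLooseCycle 3 l (↑H : Set (Finset α)))
    (X Y : Finset α) (hXY : IsExtender l H X Y) :
    ∃ Z ⊆ X, IndepIn (Reduced l H) Z ∧
      (X.card : ℝ) / ((l : ℝ) - 2) ≤ (Z.card : ℝ) := by
  classical
  have hK : ∀ e ∈ X.powerset.filter (· ∈ Reduced l H), e ⊆ X ∧ e ∈ Reduced l H :=
    fun e he => by rwa [mem_filter, mem_powerset] at he
  obtain ⟨Z, hZX, hZ, hXZ⟩ := exists_indep_of_not_hasSimplePath
    (fun e he => card_of_mem_reduced h3 (hK e he).2) (by omega : 1 ≤ l - 2)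
    (hXY.not_hasSimplePath hl h3 hfree hK) X
  refine ⟨Z, hZX, fun e he heZ => hZ e (mem_filter.2 ⟨mem_powerset.2 (heZ.trans hZX), he⟩) heZ, ?_⟩
  have hl₂ : ((l - 2 : ℕ) : ℝ) = (l : ℝ) - 2 := by
    rw [Nat.cast_sub (by omega)]
    norm_num
  rw [div_le_iff₀ (by rw [← hl₂]; exact_mod_cast (by omega : 0 < l - 2)), ← hl₂, mul_comm]
  exact_mod_cast hXZ
end

section
/- Let l ≥ 3 and r ≥ 2 be integers and let H be a hypergraph all of whose edges have size between 2 and r. Suppose H contains rl distinct edges e_1, …, e_{rl}, each strictly containing a set C with |C| ≥ 2, such that e_i ∩ e_j = C for all i ≠ j. Let H' be the hypergraph on V(H) obtained from H by deleting every edge that contains C and adding C as an edge. Then α(H) ≥ α(H'), and if H' contains a loose cycle of length l then so does H. -/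
open Finset

/-- The independence number of a hypergraph on a finite vertex type. -/
noncomputable def hyperAlpha {α : Type*} [DecidableEq α] [Fintype α]
    (H : Finset (Finset α)) : ℕ :=
  sSup {k | ∃ X : Finset α, IndepIn (↑H : Set (Finset α)) X ∧ X.card = k}


/-!
Every edge of `H` contains an edge of `H'` (either `C` or itself), so independent sets of `H'`
are independent in `H`. For loose cycles, a cycle of `H'` not using `C` already lies in `H`.
If it uses `C`, the other `l - 1` edges cover at most `(l - 1) r < r l` vertices, so one of the
`r l` petals `e k` meets them only inside `C`; replacing `C` by `e k` keeps every pairwise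
intersection of the cycle unchanged, hence gives a loose cycle of `H`.
-/

section LooseCycle

variable {α : Type*} [DecidableEq α] {l : ℕ} {f : ℕ → Finset α}

theorem IsLooseCycleOn.succ_mod_ne (hf : IsLooseCycleOn l f) {a : ℕ} (ha : a < l) :
    (a + 1) % l ≠ a := by
  intro h
  have h1 := hf.2.2.1 a ha
  rw [h, inter_self] at h1
  have h2 := hf.2.1 a ha
  omega

theorem IsLooseCycleOn.card_inter_le_one (hf : IsLooseCycleOn l f) {a b : ℕ} (ha : a < l)
    (hb : b < l) (hab : a ≠ b) : (f a ∩ f b).card ≤ 1 := by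
  by_cases hsucc : b = (a + 1) % l
  · exact hsucc ▸ (hf.2.2.1 a ha).le
  by_cases hpred : a = (b + 1) % l
  · rw [inter_comm, hpred]
    exact (hf.2.2.1 b hb).le
  simp [hf.2.2.2 a ha b hb (Ne.symm hab) hsucc hpred]

theorem IsLooseCycleOn.of_inter_eq (hf : IsLooseCycleOn l f) {g : ℕ → Finset α}
    (hcard : ∀ a < l, 2 ≤ (g a).card)
    (hinter : ∀ a < l, ∀ b < l, a ≠ b → g a ∩ g b = f a ∩ f b) :
    IsLooseCycleOn l g := by
  have hsucc_lt : ∀ a < l, (a + 1) % l < l := fun a ha => Nat.mod_lt _ (by omega)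
  refine ⟨fun a ha b hb hab hgab => ?_, hcard, fun a ha => ?_,
    fun a ha b hb hba hsucc hpred => ?_⟩
  · have hle : (g b).card ≤ 1 := by
      have h := hinter a ha b hb hab
      rw [hgab, inter_self] at h
      exact h ▸ hf.card_inter_le_one ha hb hab
    exact absurd (hcard b hb) (by omega)
  · rw [hinter a ha _ (hsucc_lt a ha) (hf.succ_mod_ne ha).symm]
    exact hf.2.2.1 a ha
  · rw [hinter a ha b hb hba.symm]
    exact hf.2.2.2 a ha b hb hba hsucc hpred

theorem IsLooseCycleOn.update (hf : IsLooseCycleOn l f) {i : ℕ} (hi : i < l) {g : Finset α}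
    (hfg : f i ⊆ g) (hgf : ∀ j < l, j ≠ i → g ∩ f j ⊆ f i) :
    IsLooseCycleOn l (Function.update f i g) := by
  have hswap : ∀ j < l, j ≠ i → g ∩ f j = f i ∩ f j := fun j hj hji =>
    Subset.antisymm (subset_inter (hgf j hj hji) inter_subset_right)
      (inter_subset_inter_right hfg)
  refine hf.of_inter_eq (fun a ha => ?_) (fun a ha b hb hab => ?_)
  · rcases eq_or_ne a i with rfl | hai
    · simpa using (hf.2.1 a ha).trans (card_le_card hfg)
    · simpa [hai] using hf.2.1 a ha
  · rcases eq_or_ne a i with rfl | hai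
    · simpa [Ne.symm hab] using hswap b hb (Ne.symm hab)
    rcases eq_or_ne b i with rfl | hbi
    · simpa [hab, inter_comm] using hswap a ha hab
    simp [hai, hbi]

end LooseCycle

theorem Finset.exists_sdiff_disjoint_of_card_lt {ι α : Type*} [DecidableEq α] {s : Finset ι}
    {e : ι → Finset α} {C T : Finset α}
    (hsun : (s : Set ι).Pairwise fun i j => e i ∩ e j = C) (hT : T.card < s.card) : ∃ k ∈ s, Disjoint (e k \ C) T := by
  by_contra! hmeet
  -- pigeonhole: the petals minus the core are pairwise disjoint
  have hdisj : (s : Set ι).PairwiseDisjoint fun k => (e k \ C) ∩ T := by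
    intro i hi j hj hij
    refine disjoint_left.mpr fun x hxi hxj => ?_
    have hx : x ∈ e i ∩ e j := mem_inter.mpr
      ⟨(mem_sdiff.mp (mem_inter.mp hxi).1).1, (mem_sdiff.mp (mem_inter.mp hxj).1).1⟩
    rw [hsun hi hj hij] at hx
    exact (mem_sdiff.mp (mem_inter.mp hxi).1).2 hx
  have hle := card_le_card_biUnion hdisj fun k hk =>
    not_disjoint_iff_nonempty_inter.mp (hmeet k hk)
  have hsub : (s.biUnion fun k => (e k \ C) ∩ T) ⊆ T :=
    biUnion_subset.mpr fun _ _ => inter_subset_right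
  exact absurd (hle.trans (card_le_card hsub)) (not_le.mpr hT)

theorem ContainsLooseCycle.of_subset_insert_sunflower {α ι : Type*} [DecidableEq α]
    {l r : ℕ} {E H : Set (Finset α)} {C : Finset α} (hE : ContainsLooseCycle l E)
    (hEH : E ⊆ insert C H) (hr : 0 < r) (hH : ∀ f ∈ H, f.card ≤ r) {s : Finset ι}
    {e : ι → Finset α} (hs : r * l ≤ s.card) (hmem : ∀ k ∈ s, e k ∈ H)
    (hcore : ∀ k ∈ s, C ⊆ e k) (hsun : (s : Set ι).Pairwise fun i j => e i ∩ e j = C) :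
    ContainsLooseCycle l H := by
  obtain ⟨f, hf, hfE⟩ := hE
  by_cases huse : ∃ i < l, f i = C
  swap
  · push Not at huse
    exact ⟨f, hf, fun j hj => (hEH (hfE j hj)).resolve_left (huse j hj)⟩
  obtain ⟨i, hi, hfi⟩ := huse
  have hfH : ∀ j < l, j ≠ i → f j ∈ H := fun j hj hji =>
    (hEH (hfE j hj)).resolve_left (hfi ▸ hf.1 j hj i hi hji)
  set T := ((range l).erase i).biUnion f
  have hT : T.card < s.card := calc
    T.card ≤ ((range l).erase i).card * r := card_biUnion_le_card_mul _ _ _ fun j hj =>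
        hH _ (hfH j (mem_range.mp (mem_of_mem_erase hj)) (ne_of_mem_erase hj))
    _ = (l - 1) * r := by rw [card_erase_of_mem (mem_range.mpr hi), card_range]
    _ < r * l := by rw [mul_comm r]; exact Nat.mul_lt_mul_of_pos_right (by omega) hr
    _ ≤ s.card := hs
  obtain ⟨k, hk, hkT⟩ := exists_sdiff_disjoint_of_card_lt hsun hT
  refine ⟨Function.update f i (e k), hf.update hi (hfi ▸ hcore k hk) ?_, fun j hj => ?_⟩
  · intro j hj hji x hx
    rw [hfi]
    by_contra hxC
    exact disjoint_left.mp hkT (mem_sdiff.mpr ⟨(mem_inter.mp hx).1, hxC⟩)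
      (mem_biUnion.mpr ⟨j, mem_erase.mpr ⟨hji, mem_range.mpr hj⟩, (mem_inter.mp hx).2⟩)
  · rcases eq_or_ne j i with rfl | hji
    · simpa using hmem k hk
    · simpa [hji] using hfH j hj hji

theorem IndepIn.of_forall_exists_subset {α : Type*} [DecidableEq α] {E F : Set (Finset α)}
    {X : Finset α} (hEF : ∀ e ∈ E, ∃ f ∈ F, f ⊆ e) (hX : IndepIn F X) : IndepIn E X :=
  fun e he heX => by
    obtain ⟨f, hf, hfe⟩ := hEF e he
    exact hX f hf (hfe.trans heX)

theorem hyperAlpha_le_of_forall_exists_subset {α : Type*} [DecidableEq α] [Fintype α]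
    {H H' : Finset (Finset α)} (hHH' : ∀ e ∈ H, ∃ f ∈ H', f ⊆ e) :
    hyperAlpha H' ≤ hyperAlpha H := by
  refine csSup_le_csSup' ⟨Fintype.card α, ?_⟩ ?_
  · rintro _ ⟨X, -, rfl⟩
    exact X.card_le_univ
  · rintro _ ⟨X, hX, rfl⟩
    exact ⟨X, hX.of_forall_exists_subset hHH', rfl⟩

theorem sunflower_replacement_general {α : Type*} [DecidableEq α] [Fintype α] (l r : ℕ)
    (hr : 2 ≤ r)
    (H : Finset (Finset α)) (hH : ∀ e ∈ H, 2 ≤ e.card ∧ e.card ≤ r)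
    (C : Finset α)
    (e : ℕ → Finset α)
    (hmem : ∀ i < r * l, e i ∈ H)
    (hcore : ∀ i < r * l, C ⊆ e i ∧ C ≠ e i)
    (hinter : ∀ i < r * l, ∀ j < r * l, i ≠ j → e i ∩ e j = C) :
    hyperAlpha ((H.filter fun f => ¬ C ⊆ f) ∪ {C}) ≤ hyperAlpha H ∧
      (ContainsLooseCycle l (↑((H.filter fun f => ¬ C ⊆ f) ∪ {C}) : Set (Finset α)) →
        ContainsLooseCycle l (↑H : Set (Finset α))) := by
  refine ⟨hyperAlpha_le_of_forall_exists_subset fun f hf => ?_, fun hcyc => ?_⟩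
  · by_cases hCf : C ⊆ f
    · exact ⟨C, by simp, hCf⟩
    · exact ⟨f, by simp [hf, hCf], subset_rfl⟩
  · refine hcyc.of_subset_insert_sunflower (s := range (r * l)) (e := e) ?_ (by omega)
      (fun f hf => (hH f hf).2) (card_range _).ge (fun k hk => hmem k (mem_range.mp hk))
      (fun k hk => (hcore k (mem_range.mp hk)).1)
      (fun i hi j hj hij => hinter i (mem_range.mp hi) j (mem_range.mp hj) hij)
    intro f hf
    rcases mem_union.mp hf with hf | hf
    · exact Or.inr (mem_filter.mp hf).1
    · exact Or.inl (mem_singleton.mp hf)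

/-- Sunflower replacement: if a `[2,r]`-graph `H` contains `r*l` edges forming a
sunflower with core `C`, `|C| ≥ 2`, each petal strictly containing `C`, then
replacing all edges containing `C` by the single edge `C` does not increase the
independence number and does not remove loose cycles of length `l`. -/
theorem sunflower_replacement {α : Type*} [DecidableEq α] [Fintype α] (l r : ℕ)
    (hl : 3 ≤ l) (hr : 2 ≤ r)
    (H : Finset (Finset α)) (hH : ∀ e ∈ H, 2 ≤ e.card ∧ e.card ≤ r)
    (C : Finset α) (hC : 2 ≤ C.card)
    (e : ℕ → Finset α)
    (hdist : ∀ i < r * l, ∀ j < r * l, i ≠ j → e i ≠ e j)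
    (hmem : ∀ i < r * l, e i ∈ H)
    (hcore : ∀ i < r * l, C ⊆ e i ∧ C ≠ e i)
    (hinter : ∀ i < r * l, ∀ j < r * l, i ≠ j → e i ∩ e j = C) :
    hyperAlpha ((H.filter fun f => ¬ C ⊆ f) ∪ {C}) ≤ hyperAlpha H ∧
      (ContainsLooseCycle l (↑((H.filter fun f => ¬ C ⊆ f) ∪ {C}) : Set (Finset α)) →
        ContainsLooseCycle l (↑H : Set (Finset α))) :=
  sunflower_replacement_general l r hr H hH C e hmem hcore hinter
end
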